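/- arXiv:2403.08324 — 5 statements merged into one kernel-verified Lean document; each statement's English description precedes it below -/
import Mathlib

section
/- There exists an absolute constant C > 0 such that for every real number U ≥ 1, every positive integer N, and every sequence of complex numbers (a_n)_{1 ≤ n ≤ N}, one has ∫_{-U}^{U} |∑_{n=1}^{N} a_n n^{iu}|^2 du ≤ C (U + N) ∑_{n=1}^{N} |a_n|^2. -/
open MeasureTheory Complex Finset ComplexConjugate
open scoped Real

/-!
Gallagher's argument with a Gaussian weight. On `[-U, U]` the weight `exp (-u² / U²)` is at
least `e⁻¹`, so the integral is at most `e` times the weighted integral over `ℝ`. Expanding the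
square, the weighted integral is a quadratic form in `a` whose kernel is the Fourier transform
of the Gaussian, `√π U exp (-(U (log m - log n))² / 4)`. Since `|log m - log n| ≥ |m - n| / N`,
each row of the kernel is dominated by a discrete Gaussian in `m - n` of width `N / U`, whose
sum is `O(1 + N / U)` by comparison with the Gaussian integral, and Schur's test bounds the
form by `O(U + N) ∑ ‖a n‖²`.
-/

theorem Finset.sum_comp_le_sum_of_injOn {ι κ M : Type*} [AddCommMonoid M] [PartialOrder M]
    [IsOrderedAddMonoid M] {s : Finset ι} {t : Finset κ} {g : κ → M} (e : ι → κ)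
    (he : Set.InjOn e s) (hst : Set.MapsTo e s t)
    (hg : ∀ k ∈ t, 0 ≤ g k) : ∑ i ∈ s, g (e i) ≤ ∑ k ∈ t, g k := by
  classical
  rw [← sum_image he]
  exact sum_le_sum_of_subset_of_nonneg (image_subset_iff.2 hst) fun k hk _ => hg k hk

theorem sum_sum_mul_mul_le_of_row_sum_le {ι : Type*} (s : Finset ι) (c : ι → ℝ)
    {w : ι → ι → ℝ} {R : ℝ} (hw : ∀ i ∈ s, ∀ j ∈ s, 0 ≤ w i j)
    (hsymm : ∀ i j, w i j = w j i) (hrow : ∀ i ∈ s, ∑ j ∈ s, w i j ≤ R) :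
    ∑ i ∈ s, ∑ j ∈ s, c i * c j * w i j ≤ R * ∑ i ∈ s, c i ^ 2 := by
  calc ∑ i ∈ s, ∑ j ∈ s, c i * c j * w i j
      ≤ ∑ i ∈ s, ∑ j ∈ s, (c i ^ 2 / 2 * w i j + c j ^ 2 / 2 * w j i) := by
        refine sum_le_sum fun i hi => sum_le_sum fun j hj => ?_
        rw [hsymm j i]
        nlinarith [mul_nonneg (sq_nonneg (c i - c j)) (hw i hi j hj)]
    _ = 2 * ∑ i ∈ s, ∑ j ∈ s, c i ^ 2 / 2 * w i j := by
        simp only [sum_add_distrib]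
        rw [sum_comm (f := fun i j => c j ^ 2 / 2 * w j i), two_mul]
    _ = ∑ i ∈ s, c i ^ 2 * ∑ j ∈ s, w i j := by
        simp only [mul_sum]
        exact sum_congr rfl fun i _ => sum_congr rfl fun j _ => by ring
    _ ≤ ∑ i ∈ s, c i ^ 2 * R := sum_le_sum fun i hi => by gcongr; exact hrow i hi
    _ = R * ∑ i ∈ s, c i ^ 2 := by rw [mul_sum]; simp only [mul_comm]

theorem abs_sub_le_mul_abs_log_sub_log {x y N : ℝ} (hx : 0 < x) (hy : 0 < y) (hxN : x ≤ N)
    (hyN : y ≤ N) : |x - y| ≤ N * |Real.log x - Real.log y| := by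
  wlog hyx : y ≤ x generalizing x y
  · rw [abs_sub_comm, abs_sub_comm (Real.log x)]
    exact this hy hx hyN hxN (le_of_not_ge hyx)
  have hlog : Real.log y ≤ Real.log x := Real.log_le_log hy hyx
  have key : 1 - (x / y)⁻¹ ≤ Real.log (x / y) := Real.one_sub_inv_le_log_of_pos (by positivity)
  rw [Real.log_div hx.ne' hy.ne', inv_div] at key
  rw [abs_of_nonneg (sub_nonneg.2 hyx), abs_of_nonneg (sub_nonneg.2 hlog)]
  calc x - y = x * (1 - y / x) := by field_simp
    _ ≤ x * (Real.log x - Real.log y) := by gcongr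
    _ ≤ N * (Real.log x - Real.log y) := by gcongr

theorem sum_range_exp_neg_mul_sq_le {c : ℝ} (hc : 0 < c) (K : ℕ) :
    ∑ k ∈ range K, rexp (-c * k ^ 2) ≤ 1 + √(π / c) / 2 := by
  set g : ℝ → ℝ := fun x => rexp (-c * x ^ 2)
  have hg : AntitoneOn g (Set.Ici 0) := fun x (hx : 0 ≤ x) y _ hxy =>
    Real.exp_le_exp.2 <| by rw [neg_mul, neg_mul, neg_le_neg_iff]; gcongr
  cases K with
  | zero => rw [range_zero, sum_empty]; positivity
  | succ K =>
    have hsum : ∑ i ∈ range K, g (0 + ↑(i + 1)) ≤ ∫ x in (0 : ℝ)..0 + K, g x :=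
      (hg.mono Set.Icc_subset_Ici_self).sum_le_integral
    have htail : ∫ x in (0 : ℝ)..K, g x ≤ √(π / c) / 2 := by
      rw [← integral_gaussian_Ioi, intervalIntegral.integral_of_le (by positivity)]
      exact setIntegral_mono_set (integrable_exp_neg_mul_sq hc).integrableOn
        (.of_forall fun x => (Real.exp_pos _).le) Set.Ioc_subset_Ioi_self.eventuallyLE
    simp only [zero_add] at hsum
    have hg0 : g 0 = 1 := by simp [g]
    change ∑ k ∈ range (K + 1), g k ≤ _
    rw [sum_range_succ', Nat.cast_zero, hg0]
    linarith

theorem sum_Icc_exp_neg_mul_sq_sub_le {c : ℝ} (hc : 0 < c) (N m : ℕ) :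
    ∑ n ∈ Icc 1 N, rexp (-c * ((m : ℝ) - n) ^ 2) ≤ 2 + √(π / c) := by
  set g : ℕ → ℝ := fun k => rexp (-c * k ^ 2)
  have hg : ∀ k, 0 ≤ g k := fun k => (Real.exp_pos _).le
  have hle : ∑ n ∈ Icc 1 N with n ≤ m, rexp (-c * ((m : ℝ) - n) ^ 2) ≤
      ∑ k ∈ range m, g k :=
    calc _ = ∑ n ∈ Icc 1 N with n ≤ m, g (m - n) := sum_congr rfl fun n hn => by
            rw [mem_filter] at hn
            simp only [g, Nat.cast_sub hn.2]
      _ ≤ _ := sum_comp_le_sum_of_injOn _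
            (fun x hx y hy h => by simp only [mem_coe, mem_filter, mem_Icc] at hx hy; omega)
            (fun n hn => by simp only [mem_coe, mem_filter, mem_Icc, mem_range] at hn ⊢; omega)
            fun k _ => hg k
  have hgt : ∑ n ∈ Icc 1 N with ¬ n ≤ m, rexp (-c * ((m : ℝ) - n) ^ 2) ≤
      ∑ k ∈ range (N + 1), g k :=
    calc _ = ∑ n ∈ Icc 1 N with ¬ n ≤ m, g (n - m) := sum_congr rfl fun n hn => by
            rw [mem_filter, not_le] at hn
            simp only [g, Nat.cast_sub hn.2.le]
            ring_nf
      _ ≤ _ := sum_comp_le_sum_of_injOn _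
            (fun x hx y hy h => by simp only [mem_coe, mem_filter, mem_Icc] at hx hy; omega)
            (fun n hn => by simp only [mem_coe, mem_filter, mem_Icc, mem_range] at hn ⊢; omega)
            fun k _ => hg k
  rw [← sum_filter_add_sum_filter_not _ (· ≤ m)]
  linarith [sum_range_exp_neg_mul_sq_le hc m, sum_range_exp_neg_mul_sq_le hc (N + 1)]

theorem sum_Icc_exp_neg_sq_mul_log_sub_le {U : ℝ} (hU : 0 < U) {N m : ℕ} (hm : m ∈ Icc 1 N) :
    ∑ n ∈ Icc 1 N, rexp (-(U * (Real.log m - Real.log n)) ^ 2 / 4) ≤ 2 + 2 * √π * N / U := by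
  obtain ⟨hm1, hmN⟩ := mem_Icc.1 hm
  have hN : (0 : ℝ) < N := Nat.cast_pos.2 (by omega)
  set c := (U / (2 * N)) ^ 2
  calc _ ≤ ∑ n ∈ Icc 1 N, rexp (-c * ((m : ℝ) - n) ^ 2) := sum_le_sum fun n hn => by
          obtain ⟨hn1, hnN⟩ := mem_Icc.1 hn
          have hgap : ((m : ℝ) - n) ^ 2 ≤ (N * (Real.log m - Real.log n)) ^ 2 := by
            rw [sq_le_sq, abs_mul, abs_of_pos hN]
            exact abs_sub_le_mul_abs_log_sub_log (by positivity) (by positivity)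
              (by exact_mod_cast hmN) (by exact_mod_cast hnN)
          refine Real.exp_le_exp.2 ?_
          have : c * ((m : ℝ) - n) ^ 2 ≤ c * (N * (Real.log m - Real.log n)) ^ 2 := by gcongr
          simp only [c] at this ⊢
          field_simp at this ⊢
          linarith
    _ ≤ 2 + √(π / c) := sum_Icc_exp_neg_mul_sq_sub_le (by positivity) N m
    _ = 2 + 2 * √π * N / U := by
          rw [Real.sqrt_div' _ (by positivity), Real.sqrt_sq (by positivity)]
          field_simp

theorem fourierIntegral_gaussian_of_real {b : ℝ} (hb : 0 < b) (t : ℝ) :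
    ∫ u : ℝ, cexp (I * t * u) * cexp (-b * u ^ 2) = ↑(√(π / b) * rexp (-t ^ 2 / (4 * b))) := by
  rw [fourierIntegral_gaussian (by simpa using hb), Real.sqrt_eq_rpow, ofReal_mul,
    ofReal_cpow (by positivity), ofReal_exp]
  push_cast
  rfl

theorem intervalIntegral_le_exp_one_mul_integral_mul_gaussian {g : ℝ → ℝ} {U b : ℝ}
    (hU : 0 ≤ U) (hbU : b * U ^ 2 ≤ 1) (hg : Continuous g) (hg0 : 0 ≤ g)
    (hint : Integrable fun u => g u * rexp (-b * u ^ 2)) :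
    ∫ u in -U..U, g u ≤ rexp 1 * ∫ u, g u * rexp (-b * u ^ 2) := by
  calc ∫ u in -U..U, g u ≤ ∫ u in -U..U, rexp 1 * (g u * rexp (-b * u ^ 2)) := by
        refine intervalIntegral.integral_mono_on (by linarith) (hg.intervalIntegrable _ _)
          (hint.const_mul _).intervalIntegrable fun u ⟨hu₁, hu₂⟩ => ?_
        have hu : u ^ 2 ≤ U ^ 2 := by nlinarith
        have hbu : b * u ^ 2 ≤ 1 := by
          rcases le_total 0 b with hb | hb
          · nlinarith [mul_le_mul_of_nonneg_left hu hb]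
          · nlinarith [sq_nonneg u]
        have hweight : 1 ≤ rexp 1 * rexp (-b * u ^ 2) := by
          rw [← Real.exp_add]
          exact Real.one_le_exp (by linarith)
        nlinarith [mul_le_mul_of_nonneg_left hweight (hg0 u)]
    _ = rexp 1 * ∫ u in -U..U, g u * rexp (-b * u ^ 2) := intervalIntegral.integral_const_mul _ _
    _ ≤ rexp 1 * ∫ u, g u * rexp (-b * u ^ 2) := by
        rw [intervalIntegral.integral_of_le (by linarith)]
        exact mul_le_mul_of_nonneg_left (setIntegral_le_integral hint
          (.of_forall fun u => mul_nonneg (hg0 u) (by positivity))) (by positivity)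

theorem integrable_cexp_I_mul_mul_gaussian {b : ℝ} (hb : 0 < b) (t : ℝ) :
    Integrable fun u : ℝ => cexp (I * t * u) * cexp (-b * u ^ 2) := by
  refine (integrable_cexp_quadratic (b := b) (by simpa using hb) (I * t) 0).congr
    (.of_forall fun u => ?_)
  dsimp only
  rw [← exp_add, add_zero, add_comm]

noncomputable def expSum {ι : Type*} (s : Finset ι) (a : ι → ℂ) (ω : ι → ℝ) (u : ℝ) : ℂ :=
  ∑ i ∈ s, a i * cexp (I * ω i * u)

section expSum

variable {ι : Type*} (s : Finset ι) (a : ι → ℂ) (ω : ι → ℝ)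

theorem continuous_expSum : Continuous (expSum s a ω) := by
  unfold expSum
  fun_prop

theorem ofReal_norm_sq_expSum_mul_gaussian (b u : ℝ) :
    ((‖expSum s a ω u‖ ^ 2 * rexp (-b * u ^ 2) : ℝ) : ℂ) =
      ∑ i ∈ s, ∑ j ∈ s, a i * conj (a j) * (cexp (I * ↑(ω i - ω j) * u) * cexp (-b * u ^ 2)) := by
  push_cast
  rw [← mul_conj', expSum, map_sum, sum_mul_sum, sum_mul]
  refine sum_congr rfl fun i _ => ?_
  rw [sum_mul]
  refine sum_congr rfl fun j _ => ?_
  rw [map_mul, ← exp_conj, sub_eq_add_neg, mul_add, add_mul, exp_add]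
  simp only [map_mul, conj_I, conj_ofReal]
  ring_nf

variable {s a ω} in
theorem integrable_norm_sq_expSum_mul_gaussian {b : ℝ} (hb : 0 < b) :
    Integrable fun u => ‖expSum s a ω u‖ ^ 2 * rexp (-b * u ^ 2) := by
  have h : Integrable fun u : ℝ => ((‖expSum s a ω u‖ ^ 2 * rexp (-b * u ^ 2) : ℝ) : ℂ) := by
    simp_rw [ofReal_norm_sq_expSum_mul_gaussian]
    exact integrable_finsetSum _ fun i _ => integrable_finsetSum _ fun j _ =>
      (integrable_cexp_I_mul_mul_gaussian hb _).const_mul _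
  simpa only [RCLike.re_to_complex, ofReal_re] using h.re

theorem ofReal_integral_norm_sq_expSum_mul_gaussian {b : ℝ} (hb : 0 < b) :
    ((∫ u, ‖expSum s a ω u‖ ^ 2 * rexp (-b * u ^ 2) : ℝ) : ℂ) =
      ∑ i ∈ s, ∑ j ∈ s, a i * conj (a j) * ↑(√(π / b) * rexp (-(ω i - ω j) ^ 2 / (4 * b))) := by
  rw [← integral_complex_ofReal]
  simp_rw [ofReal_norm_sq_expSum_mul_gaussian]
  rw [integral_finsetSum _ fun i _ => integrable_finsetSum _ fun j _ =>
    (integrable_cexp_I_mul_mul_gaussian hb _).const_mul _]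
  refine sum_congr rfl fun i _ => ?_
  rw [integral_finsetSum _ fun j _ => (integrable_cexp_I_mul_mul_gaussian hb _).const_mul _]
  refine sum_congr rfl fun j _ => ?_
  rw [integral_const_mul, fourierIntegral_gaussian_of_real hb]

theorem integral_norm_sq_expSum_mul_gaussian_le {b : ℝ} (hb : 0 < b) :
    ∫ u, ‖expSum s a ω u‖ ^ 2 * rexp (-b * u ^ 2) ≤
      √(π / b) * ∑ i ∈ s, ∑ j ∈ s, ‖a i‖ * ‖a j‖ * rexp (-(ω i - ω j) ^ 2 / (4 * b)) := by
  have h0 : 0 ≤ ∫ u, ‖expSum s a ω u‖ ^ 2 * rexp (-b * u ^ 2) :=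
    integral_nonneg fun u => by positivity
  rw [← Real.norm_of_nonneg h0, ← norm_real, ofReal_integral_norm_sq_expSum_mul_gaussian s a ω hb]
  refine (norm_sum_le _ _).trans ((sum_le_sum fun i _ => norm_sum_le _ _).trans (le_of_eq ?_))
  simp only [mul_sum, norm_mul, Complex.norm_conj, norm_real,
    Real.norm_of_nonneg (by positivity : 0 ≤ √(π / b) * rexp _)]
  exact sum_congr rfl fun i _ => sum_congr rfl fun j _ => by ring

theorem intervalIntegral_norm_sq_expSum_le {U R : ℝ} (hU : 0 < U)
    (hrow : ∀ i ∈ s, ∑ j ∈ s, rexp (-(U * (ω i - ω j)) ^ 2 / 4) ≤ R) :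
    ∫ u in -U..U, ‖expSum s a ω u‖ ^ 2 ≤ rexp 1 * √π * U * R * ∑ i ∈ s, ‖a i‖ ^ 2 := by
  set b := (U ^ 2)⁻¹
  have hb : 0 < b := by positivity
  have hkernel : ∀ i j, -(ω i - ω j) ^ 2 / (4 * b) = -(U * (ω i - ω j)) ^ 2 / 4 := fun i j => by
    simp only [b]; field_simp
  calc ∫ u in -U..U, ‖expSum s a ω u‖ ^ 2
      ≤ rexp 1 * ∫ u, ‖expSum s a ω u‖ ^ 2 * rexp (-b * u ^ 2) :=
        intervalIntegral_le_exp_one_mul_integral_mul_gaussian hU.le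
          (inv_mul_cancel₀ (by positivity)).le
          ((continuous_expSum s a ω).norm.pow 2) (fun u => by positivity)
          (integrable_norm_sq_expSum_mul_gaussian hb)
    _ ≤ rexp 1 * (√(π / b) *
          ∑ i ∈ s, ∑ j ∈ s, ‖a i‖ * ‖a j‖ * rexp (-(U * (ω i - ω j)) ^ 2 / 4)) := by
        simp_rw [← hkernel]
        gcongr
        exact integral_norm_sq_expSum_mul_gaussian_le s a ω hb
    _ ≤ rexp 1 * (√(π / b) * (R * ∑ i ∈ s, ‖a i‖ ^ 2)) := by
        gcongr
        refine sum_sum_mul_mul_le_of_row_sum_le s (‖a ·‖) (fun _ _ _ _ => by positivity)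
          (fun i j => ?_) hrow
        rw [← neg_sub (ω i), mul_neg, neg_sq]
    _ = rexp 1 * √π * U * R * ∑ i ∈ s, ‖a i‖ ^ 2 := by
        rw [Real.sqrt_div' _ hb.le, Real.sqrt_inv, Real.sqrt_sq hU.le]
        field_simp

end expSum

theorem natCast_cpow_I_mul {n : ℕ} (hn : n ≠ 0) (u : ℝ) :
    (n : ℂ) ^ (I * u) = cexp (I * (Real.log n : ℝ) * u) := by
  rw [cpow_def_of_ne_zero (Nat.cast_ne_zero.2 hn), ← natCast_log]
  ring_nf

/-- **Gallagher's large sieve inequality.**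
There is an absolute constant `C > 0` such that for every `U ≥ 1`, every positive
integer `N` and every sequence of complex numbers `a`, one has
`∫_{-U}^{U} ‖∑_{n=1}^{N} a n * n^{iu}‖² du ≤ C (U + N) ∑_{n=1}^{N} ‖a n‖²`. -/
theorem large_sieve_one_dim :
    ∃ C : ℝ, 0 < C ∧ ∀ (U : ℝ), 1 ≤ U → ∀ (N : ℕ), 0 < N → ∀ (a : ℕ → ℂ),
      (∫ u in (-U)..U,
          ‖∑ n ∈ Finset.Icc 1 N, a n * (n : ℂ) ^ (Complex.I * (u : ℂ))‖ ^ 2)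
        ≤ C * (U + N) * ∑ n ∈ Finset.Icc 1 N, ‖a n‖ ^ 2 := by
  refine ⟨2 * π * rexp 1, by positivity, fun U hU N _ a => ?_⟩
  have hU₀ : 0 < U := by linarith
  have hexpSum : ∀ u : ℝ, ∑ n ∈ Icc 1 N, a n * (n : ℂ) ^ (I * u) =
      expSum (Icc 1 N) a (fun n => Real.log n) u := fun u =>
    sum_congr rfl fun n hn => by rw [natCast_cpow_I_mul (by grind)]
  have hsqrt_pi : √π ≤ π := Real.sqrt_le_iff.2 ⟨Real.pi_pos.le, by nlinarith [Real.pi_gt_three]⟩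
  simp_rw [hexpSum]
  calc _ ≤ rexp 1 * √π * U * (2 + 2 * √π * N / U) * ∑ n ∈ Icc 1 N, ‖a n‖ ^ 2 :=
        intervalIntegral_norm_sq_expSum_le _ a _ hU₀ fun m hm =>
          sum_Icc_exp_neg_sq_mul_log_sub_le hU₀ hm
    _ = 2 * rexp 1 * (√π * U + π * N) * ∑ n ∈ Icc 1 N, ‖a n‖ ^ 2 := by
        field_simp
        linear_combination (N * ∑ n ∈ Icc 1 N, ‖a n‖ ^ 2) * Real.mul_self_sqrt Real.pi_pos.le
    _ ≤ 2 * π * rexp 1 * (U + N) * ∑ n ∈ Icc 1 N, ‖a n‖ ^ 2 := by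
        gcongr ?_ * _
        nlinarith [Real.exp_pos 1, mul_le_mul_of_nonneg_right hsqrt_pi hU₀.le]
end

section
/- For every ε > 0 there exists a constant C_ε > 0 such that the following holds. Let U ≥ 1 be a real number, let M, N be positive integers, and let (a_{m,n})_{1 ≤ m ≤ M, 1 ≤ n ≤ N} be complex numbers supported on coprime pairs, i.e. a_{m,n} = 0 whenever gcd(m,n) ≠ 1. Then ∫_{-U}^{U} |∑_{n=1}^{N} ∑_{m=1}^{M} a_{m,n} (m/n)^{iu}|^2 du ≤ C_ε (MN)^ε (U + MN) ∑_{m=1}^{M} ∑_{n=1}^{N} |a_{m,n}|^2. -/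
/-!
Write `λ(m, n) = log m - log n`, so that the integrand is `|∑ a(p) e^{i u λ(p)}|²` over coprime
pairs `p` in the box. For distinct coprime pairs the cross products `m n'` and `m' n` are distinct
integers at most `MN`, so the frequencies are `1/(MN)`-separated, and they all lie in an interval
of length `log(MN)`. Expanding the square, the kernel `∫_{-U}^{U} e^{i u θ} du` is at most `2U`
on the diagonal and `2/|θ|` off it; by `2|xy| ≤ x² + y²` it then suffices to bound the row sums
`∑_{q ≠ p} 1/|λ(p) - λ(q)|`. For `δ`-separated points, those on either side of `λ(p)` have
distinct values of `⌊|λ(p) - λ(q)|/δ⌋`, so each row sum is at most `(2/δ)` times a harmonic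
number, i.e. `O(MN log(MN)) ≤ C_ε (MN)^{1+ε}`.
-/

open MeasureTheory Complex Finset ComplexConjugate

theorem integral_norm_sum_sq_le {ι : Type*} (s : Finset ι) (f : ι → ℝ → ℂ)
    (hf : ∀ i ∈ s, Continuous (f i)) (a b : ℝ) :
    ∫ u in a..b, ‖∑ i ∈ s, f i u‖ ^ 2 ≤
      ∑ i ∈ s, ∑ j ∈ s, ‖∫ u in a..b, f i u * conj (f j u)‖ := by
  have hcont : ∀ i ∈ s, ∀ j ∈ s, Continuous fun u => f i u * conj (f j u) :=
    fun i hi j hj => (hf i hi).mul (continuous_conj.comp (hf j hj))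
  have hexpand : ((∫ u in a..b, ‖∑ i ∈ s, f i u‖ ^ 2 : ℝ) : ℂ) =
      ∑ i ∈ s, ∑ j ∈ s, ∫ u in a..b, f i u * conj (f j u) := by
    rw [← intervalIntegral.integral_ofReal]
    simp_rw [ofReal_pow, ← mul_conj', map_sum, sum_mul_sum]
    rw [intervalIntegral.integral_finsetSum fun i hi =>
      (continuous_finsetSum s fun j hj => hcont i hi j hj).intervalIntegrable a b]
    exact sum_congr rfl fun i hi => intervalIntegral.integral_finsetSum fun j hj =>
      (hcont i hi j hj).intervalIntegrable a b
  calc ∫ u in a..b, ‖∑ i ∈ s, f i u‖ ^ 2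
      ≤ ‖((∫ u in a..b, ‖∑ i ∈ s, f i u‖ ^ 2 : ℝ) : ℂ)‖ := by
        rw [norm_real, Real.norm_eq_abs]; exact le_abs_self _
    _ ≤ _ := by rw [hexpand]; exact (norm_sum_le _ _).trans (sum_le_sum fun i _ => norm_sum_le _ _)

theorem sum_sum_mul_mul_le_of_symm {ι : Type*} (s : Finset ι) (v : ι → ℝ) (k : ι → ι → ℝ)
    (hk : ∀ i ∈ s, ∀ j ∈ s, 0 ≤ k i j) (hsymm : ∀ i ∈ s, ∀ j ∈ s, k i j = k j i) {B : ℝ}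
    (hB : ∀ i ∈ s, ∑ j ∈ s, k i j ≤ B) :
    ∑ i ∈ s, ∑ j ∈ s, v i * v j * k i j ≤ B * ∑ i ∈ s, v i ^ 2 := by
  have hswap : ∑ i ∈ s, ∑ j ∈ s, v j ^ 2 * k i j = ∑ i ∈ s, ∑ j ∈ s, v i ^ 2 * k i j := by
    rw [sum_comm]
    exact sum_congr rfl fun i hi => sum_congr rfl fun j hj => by rw [hsymm j hj i hi]
  calc ∑ i ∈ s, ∑ j ∈ s, v i * v j * k i j
      ≤ ∑ i ∈ s, ∑ j ∈ s, (v i ^ 2 * k i j + v j ^ 2 * k i j) / 2 :=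
        sum_le_sum fun i hi => sum_le_sum fun j hj => by
          nlinarith [mul_nonneg (sq_nonneg (v i - v j)) (hk i hi j hj)]
    _ = ∑ i ∈ s, v i ^ 2 * ∑ j ∈ s, k i j := by
        simp only [← sum_div, sum_add_distrib, hswap, mul_sum]; ring
    _ ≤ ∑ i ∈ s, v i ^ 2 * B := sum_le_sum fun i hi => by gcongr; exact hB i hi
    _ = B * ∑ i ∈ s, v i ^ 2 := by rw [mul_sum]; simp_rw [mul_comm]

theorem norm_intervalIntegral_exp_le_two_mul (U θ : ℝ) (hU : 0 ≤ U) :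
    ‖∫ u in (-U)..U, cexp (I * θ * u)‖ ≤ 2 * U := by
  have := intervalIntegral.norm_integral_le_of_norm_le_const (C := 1) (a := -U) (b := U)
    (f := fun u : ℝ => cexp (I * θ * u)) fun u _ => by
      rw [norm_exp]; simp
  rwa [abs_of_nonneg (by linarith), one_mul, sub_neg_eq_add, ← two_mul] at this

theorem norm_intervalIntegral_exp_le_two_div {θ : ℝ} (hθ : θ ≠ 0) (a b : ℝ) :
    ‖∫ u in a..b, cexp (I * θ * u)‖ ≤ 2 / |θ| := by
  have hc : I * θ ≠ 0 := mul_ne_zero I_ne_zero (ofReal_ne_zero.mpr hθ)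
  have hunit : ∀ u : ℝ, ‖cexp (I * θ * u)‖ = 1 := fun u => by rw [norm_exp]; simp
  rw [integral_exp_mul_complex hc, norm_div, norm_mul, norm_I, one_mul, norm_real,
    Real.norm_eq_abs]
  gcongr
  exact (norm_sub_le _ _).trans (by rw [hunit, hunit]; norm_num)

theorem sum_inv_le_inv_mul_harmonic {ι : Type*} (s : Finset ι) (x : ι → ℝ) {δ : ℝ}
    (hδ : 0 < δ) (R : ℕ) (hx : ∀ i ∈ s, δ ≤ x i ∧ x i ≤ R * δ)
    (hsep : ∀ i ∈ s, ∀ j ∈ s, i ≠ j → δ ≤ |x i - x j|) :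
    ∑ i ∈ s, (x i)⁻¹ ≤ δ⁻¹ * harmonic R := by
  set k : ι → ℕ := fun i => ⌊x i / δ⌋₊
  have hk_le : ∀ i ∈ s, k i * δ ≤ x i := fun i hi =>
    (le_div_iff₀ hδ).mp (Nat.floor_le (div_nonneg (hδ.le.trans (hx i hi).1) hδ.le))
  have hlt_k : ∀ i, x i < (k i + 1) * δ := fun i => (div_lt_iff₀ hδ).mp (Nat.lt_floor_add_one _)
  have hk_mem : ∀ i ∈ s, k i ∈ Icc 1 R := fun i hi => by
    have h1 : (1 : ℝ) ≤ x i / δ := (one_le_div hδ).mpr (hx i hi).1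
    have h2 : x i / δ ≤ R := (div_le_iff₀ hδ).mpr (hx i hi).2
    exact mem_Icc.mpr ⟨Nat.one_le_floor_iff _ |>.mpr h1, Nat.floor_le_of_le h2⟩
  have hk_inj : Set.InjOn k s := fun i hi j hj hij => by
    by_contra hne
    have hfar := hsep i hi j hj hne
    have hi1 := hk_le i hi; have hi2 := hlt_k i; have hj1 := hk_le j hj; have hj2 := hlt_k j
    rw [hij] at hi1 hi2
    have hclose : |x i - x j| < δ := abs_sub_lt_iff.mpr ⟨by linarith, by linarith⟩
    linarith
  calc ∑ i ∈ s, (x i)⁻¹ ≤ ∑ i ∈ s, δ⁻¹ * (k i : ℝ)⁻¹ := sum_le_sum fun i hi => by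
        have : (0 : ℝ) < k i := by exact_mod_cast (mem_Icc.mp (hk_mem i hi)).1
        rw [← mul_inv]
        exact inv_anti₀ (by positivity) (by rw [mul_comm]; exact hk_le i hi)
    _ = δ⁻¹ * ∑ n ∈ s.image k, (n : ℝ)⁻¹ := by rw [← mul_sum, sum_image hk_inj]
    _ ≤ δ⁻¹ * harmonic R := by
        rw [harmonic_eq_sum_Icc]; push_cast
        gcongr
        exact image_subset_iff.mpr hk_mem

theorem sum_erase_inv_abs_sub_le {ι : Type*} [DecidableEq ι] (s : Finset ι) (x : ι → ℝ)
    {δ : ℝ} (hδ : 0 < δ) (R : ℕ) (hsep : ∀ i ∈ s, ∀ j ∈ s, i ≠ j → δ ≤ |x i - x j|)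
    (hdiam : ∀ i ∈ s, ∀ j ∈ s, |x i - x j| ≤ R * δ) {i : ι} (hi : i ∈ s) :
    ∑ j ∈ s.erase i, |x i - x j|⁻¹ ≤ 2 * δ⁻¹ * harmonic R := by
  have hsep' : ∀ t ⊆ s.erase i, ∀ j ∈ t, ∀ l ∈ t, j ≠ l → δ ≤ |x j - x l| :=
    fun t ht j hj l hl => hsep j (mem_of_mem_erase (ht hj)) l (mem_of_mem_erase (ht hl))
  have habove := sum_inv_le_inv_mul_harmonic ((s.erase i).filter fun j => x i < x j)
    (fun j => x j - x i) hδ R (fun j hj => by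
      obtain ⟨hj, hlt⟩ := mem_filter.mp hj
      have h1 := hsep j (mem_of_mem_erase hj) i hi (ne_of_mem_erase hj)
      have h2 := hdiam j (mem_of_mem_erase hj) i hi
      rw [abs_of_pos (sub_pos.mpr hlt)] at h1 h2
      exact ⟨h1, h2⟩)
    (fun j hj l hl hjl => by
      rw [sub_sub_sub_cancel_right]
      exact hsep' _ (filter_subset _ _) j hj l hl hjl)
  have hbelow := sum_inv_le_inv_mul_harmonic ((s.erase i).filter fun j => ¬x i < x j)
    (fun j => x i - x j) hδ R (fun j hj => by
      obtain ⟨hj, hle⟩ := mem_filter.mp hj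
      have h1 := hsep i hi j (mem_of_mem_erase hj) (ne_of_mem_erase hj).symm
      have h2 := hdiam i hi j (mem_of_mem_erase hj)
      rw [abs_of_nonneg (sub_nonneg.mpr (not_lt.mp hle))] at h1 h2
      exact ⟨h1, h2⟩)
    (fun j hj l hl hjl => by
      rw [sub_sub_sub_cancel_left, abs_sub_comm]
      exact hsep' _ (filter_subset _ _) j hj l hl hjl)
  rw [← sum_filter_add_sum_filter_not _ fun j => x i < x j, two_mul, add_mul]
  refine add_le_add (le_of_eq_of_le (sum_congr rfl fun j hj => ?_) habove)
    (le_of_eq_of_le (sum_congr rfl fun j hj => ?_) hbelow)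
  · rw [abs_sub_comm, abs_of_pos (sub_pos.mpr (mem_filter.mp hj).2)]
  · rw [abs_of_nonneg (sub_nonneg.mpr (not_lt.mp (mem_filter.mp hj).2))]

theorem integral_norm_sum_exp_sq_le {ι : Type*} [DecidableEq ι] (s : Finset ι) (c : ι → ℂ)
    (x : ι → ℝ) {U δ : ℝ} (hU : 0 ≤ U) (hδ : 0 < δ) (R : ℕ)
    (hsep : ∀ i ∈ s, ∀ j ∈ s, i ≠ j → δ ≤ |x i - x j|)
    (hdiam : ∀ i ∈ s, ∀ j ∈ s, |x i - x j| ≤ R * δ) :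
    ∫ u in (-U)..U, ‖∑ i ∈ s, c i * cexp (I * x i * u)‖ ^ 2 ≤
      (2 * U + 4 * δ⁻¹ * harmonic R) * ∑ i ∈ s, ‖c i‖ ^ 2 := by
  set k : ι → ι → ℝ := fun i j => if i = j then 2 * U else 2 / |x i - x j|
  have hprod : ∀ i j (u : ℝ), c i * cexp (I * x i * u) * conj (c j * cexp (I * x j * u)) =
      c i * conj (c j) * cexp (I * ↑(x i - x j) * u) := fun i j u => by
    rw [map_mul, ← exp_conj, mul_mul_mul_comm, ← exp_add]
    congr 2
    simp only [map_mul, conj_I, conj_ofReal, ofReal_sub]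
    ring
  have hkernel : ∀ i ∈ s, ∀ j ∈ s, ‖∫ u in (-U)..U, cexp (I * ↑(x i - x j) * u)‖ ≤ k i j :=
    fun i hi j hj => by
      by_cases hij : i = j
      · simpa [k, hij] using norm_intervalIntegral_exp_le_two_mul U (x j - x j) hU
      · have hne : x i - x j ≠ 0 := fun h0 => by
          have := hsep i hi j hj hij
          rw [h0, abs_zero] at this
          linarith
        simpa [k, hij] using norm_intervalIntegral_exp_le_two_div hne (-U) U
  have hrow : ∀ i ∈ s, ∑ j ∈ s, k i j ≤ 2 * U + 4 * δ⁻¹ * harmonic R := fun i hi => by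
    rw [← add_sum_erase s _ hi, sum_congr rfl fun j hj => if_neg (ne_of_mem_erase hj).symm]
    simp only [k, if_pos rfl, div_eq_mul_inv, ← mul_sum]
    linarith [sum_erase_inv_abs_sub_le s x hδ R hsep hdiam hi]
  calc ∫ u in (-U)..U, ‖∑ i ∈ s, c i * cexp (I * x i * u)‖ ^ 2
      ≤ ∑ i ∈ s, ∑ j ∈ s, ‖∫ u in (-U)..U,
          c i * cexp (I * x i * u) * conj (c j * cexp (I * x j * u))‖ :=
        integral_norm_sum_sq_le s _ (fun i _ => by fun_prop) _ _
    _ = ∑ i ∈ s, ∑ j ∈ s, ‖c i‖ * ‖c j‖ * ‖∫ u in (-U)..U, cexp (I * ↑(x i - x j) * u)‖ := by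
        simp only [hprod, intervalIntegral.integral_const_mul, norm_mul, RCLike.norm_conj]
    _ ≤ ∑ i ∈ s, ∑ j ∈ s, ‖c i‖ * ‖c j‖ * k i j :=
        sum_le_sum fun i hi => sum_le_sum fun j hj => by gcongr; exact hkernel i hi j hj
    _ ≤ (2 * U + 4 * δ⁻¹ * harmonic R) * ∑ i ∈ s, ‖c i‖ ^ 2 := by
        refine sum_sum_mul_mul_le_of_symm s _ k (fun i hi j hj => ?_) (fun i _ j _ => ?_) hrow
        · exact (norm_nonneg _).trans (hkernel i hi j hj)
        · simp only [k, eq_comm, abs_sub_comm]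

theorem Nat.eq_of_mul_eq_mul_of_coprime {m n m' n' : ℕ} (h : m.Coprime n) (h' : m'.Coprime n')
    (hm : 0 < m) (heq : m * n' = m' * n) : m = m' ∧ n = n' := by
  have hmm' : m = m' := Nat.dvd_antisymm (h.dvd_of_dvd_mul_right ⟨n', heq.symm⟩)
    (h'.dvd_of_dvd_mul_right ⟨n, heq⟩)
  subst hmm'
  exact ⟨rfl, (Nat.eq_of_mul_eq_mul_left hm heq).symm⟩

theorem Real.inv_le_log_sub_log {x y K : ℝ} (hx : 0 < x) (hxy : x + 1 ≤ y) (hyK : y ≤ K) :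
    K⁻¹ ≤ Real.log y - Real.log x := by
  have hy : 0 < y := by linarith
  have h := Real.one_sub_inv_le_log_of_pos (div_pos hy hx)
  rw [Real.log_div hy.ne' hx.ne', inv_div] at h
  calc K⁻¹ ≤ y⁻¹ := inv_anti₀ hy hyK
    _ ≤ (y - x) / y := by rw [inv_eq_one_div]; gcongr; linarith
    _ = 1 - x / y := by field_simp
    _ ≤ _ := h

def coprimePairs (M N : ℕ) : Finset (ℕ × ℕ) :=
  (Icc 1 M ×ˢ Icc 1 N).filter fun p => p.1.Coprime p.2

noncomputable def logRatio (p : ℕ × ℕ) : ℝ := Real.log p.1 - Real.log p.2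

theorem mem_coprimePairs {M N : ℕ} {p : ℕ × ℕ} :
    p ∈ coprimePairs M N ↔ (1 ≤ p.1 ∧ p.1 ≤ M) ∧ (1 ≤ p.2 ∧ p.2 ≤ N) ∧ p.1.Coprime p.2 := by
  simp [coprimePairs, and_assoc]

theorem logRatio_sub_logRatio {p q : ℕ × ℕ} (hp : 0 < p.1 ∧ 0 < p.2) (hq : 0 < q.1 ∧ 0 < q.2) :
    logRatio p - logRatio q = Real.log ((p.1 * q.2 : ℕ) : ℝ) - Real.log ((q.1 * p.2 : ℕ) : ℝ) := by
  have hpos : ∀ {n : ℕ}, 0 < n → (n : ℝ) ≠ 0 := fun h => Nat.cast_ne_zero.mpr h.ne'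
  push_cast
  rw [Real.log_mul (hpos hp.1) (hpos hq.2), Real.log_mul (hpos hq.1) (hpos hp.2), logRatio,
    logRatio]
  ring

theorem inv_le_abs_logRatio_sub {M N : ℕ} {p q : ℕ × ℕ} (hp : p ∈ coprimePairs M N)
    (hq : q ∈ coprimePairs M N) (hpq : p ≠ q) :
    ((M * N : ℕ) : ℝ)⁻¹ ≤ |logRatio p - logRatio q| := by
  obtain ⟨⟨hp1, hpM⟩, ⟨hp2, hpN⟩, hpc⟩ := mem_coprimePairs.mp hp
  obtain ⟨⟨hq1, hqM⟩, ⟨hq2, hqN⟩, hqc⟩ := mem_coprimePairs.mp hq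
  have hcross : p.1 * q.2 ≠ q.1 * p.2 := fun heq => by
    obtain ⟨h1, h2⟩ := Nat.eq_of_mul_eq_mul_of_coprime hpc hqc hp1 heq
    exact hpq (Prod.ext h1 h2)
  have hsep : ∀ {x y : ℕ}, 0 < x → x < y → y ≤ M * N →
      ((M * N : ℕ) : ℝ)⁻¹ ≤ Real.log y - Real.log x := fun hx hxy hyK =>
    Real.inv_le_log_sub_log (by exact_mod_cast hx) (by exact_mod_cast hxy) (by exact_mod_cast hyK)
  rw [logRatio_sub_logRatio ⟨hp1, hp2⟩ ⟨hq1, hq2⟩]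
  rcases hcross.lt_or_gt with h | h
  · rw [abs_sub_comm]
    exact (hsep (Nat.mul_pos hp1 hq2) h (Nat.mul_le_mul hqM hpN)).trans (le_abs_self _)
  · exact (hsep (Nat.mul_pos hq1 hp2) h (Nat.mul_le_mul hpM hqN)).trans (le_abs_self _)

theorem abs_logRatio_sub_le {M N : ℕ} {p q : ℕ × ℕ} (hp : p ∈ coprimePairs M N)
    (hq : q ∈ coprimePairs M N) :
    |logRatio p - logRatio q| ≤ Real.log ((M * N : ℕ) : ℝ) := by
  obtain ⟨⟨hp1, hpM⟩, ⟨hp2, hpN⟩, -⟩ := mem_coprimePairs.mp hp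
  obtain ⟨⟨hq1, hqM⟩, ⟨hq2, hqN⟩, -⟩ := mem_coprimePairs.mp hq
  have hlog : ∀ {x : ℕ}, 0 < x → x ≤ M * N →
      0 ≤ Real.log (x : ℝ) ∧ Real.log (x : ℝ) ≤ Real.log ((M * N : ℕ) : ℝ) := fun hx hxK =>
    ⟨Real.log_natCast_nonneg _, Real.log_le_log (by exact_mod_cast hx) (by exact_mod_cast hxK)⟩
  have h1 := hlog (Nat.mul_pos hp1 hq2) (Nat.mul_le_mul hpM hqN)
  have h2 := hlog (Nat.mul_pos hq1 hp2) (Nat.mul_le_mul hqM hpN)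
  rw [logRatio_sub_logRatio ⟨hp1, hp2⟩ ⟨hq1, hq2⟩, abs_sub_le_iff]
  constructor <;> linarith

theorem div_cpow_I_mul {m n : ℕ} (hm : 0 < m) (hn : 0 < n) (u : ℝ) :
    ((m : ℂ) / n) ^ (I * u) = cexp (I * logRatio (m, n) * u) := by
  have hpos : (0 : ℝ) < m / n := by positivity
  have hcast : (m : ℂ) / n = ((m / n : ℝ) : ℂ) := by push_cast; rfl
  rw [hcast, cpow_def_of_ne_zero (ofReal_ne_zero.mpr hpos.ne'), ← ofReal_log hpos.le,
    Real.log_div (by positivity) (by positivity), logRatio]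
  ring_nf

theorem sum_Icc_sum_Icc_eq_sum_coprimePairs {M N : ℕ} (f : ℕ → ℕ → ℂ)
    (hf : ∀ m n, ¬m.Coprime n → f m n = 0) :
    ∑ n ∈ Icc 1 N, ∑ m ∈ Icc 1 M, f m n = ∑ p ∈ coprimePairs M N, f p.1 p.2 := by
  rw [sum_comm, ← sum_product', coprimePairs, sum_filter_of_ne fun p _ h => ?_]
  by_contra hc
  exact h (hf _ _ hc)

theorem integral_norm_sum_coprime_le {U : ℝ} (hU : 0 ≤ U) {M N : ℕ} (hM : 0 < M) (hN : 0 < N)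
    (a : ℕ → ℕ → ℂ) (ha : ∀ m n : ℕ, Nat.gcd m n ≠ 1 → a m n = 0) :
    ∫ u in (-U)..U, ‖∑ n ∈ Icc 1 N, ∑ m ∈ Icc 1 M, a m n * ((m : ℂ) / (n : ℂ)) ^ (I * (u : ℂ))‖ ^ 2
      ≤ (2 * U + 4 * (M * N : ℕ) * harmonic ((M * N) ^ 2)) *
          ∑ m ∈ Icc 1 M, ∑ n ∈ Icc 1 N, ‖a m n‖ ^ 2 := by
  set K := M * N
  have hK : (0 : ℝ) < K := by positivity
  have hintegrand : ∀ u : ℝ, ∑ n ∈ Icc 1 N, ∑ m ∈ Icc 1 M, a m n * ((m : ℂ) / n) ^ (I * u) =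
      ∑ p ∈ coprimePairs M N, a p.1 p.2 * cexp (I * logRatio p * u) := fun u => by
    rw [sum_Icc_sum_Icc_eq_sum_coprimePairs _ fun m n h => by rw [ha m n h, zero_mul]]
    refine sum_congr rfl fun p hp => ?_
    obtain ⟨⟨hp1, -⟩, ⟨hp2, -⟩, -⟩ := mem_coprimePairs.mp hp
    rw [div_cpow_I_mul hp1 hp2]
  have hdiam : ∀ p ∈ coprimePairs M N, ∀ q ∈ coprimePairs M N,
      |logRatio p - logRatio q| ≤ ((K ^ 2 : ℕ) : ℝ) * (K : ℝ)⁻¹ := fun p hp q hq => by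
    rw [Nat.cast_pow, sq, mul_inv_cancel_right₀ hK.ne']
    exact (abs_logRatio_sub_le hp hq).trans (Real.log_le_self hK.le)
  have hsubset : ∑ p ∈ coprimePairs M N, ‖a p.1 p.2‖ ^ 2 ≤
      ∑ m ∈ Icc 1 M, ∑ n ∈ Icc 1 N, ‖a m n‖ ^ 2 := by
    rw [← sum_product' (f := fun m n => ‖a m n‖ ^ 2)]
    exact sum_le_sum_of_subset_of_nonneg (filter_subset _ _) fun _ _ _ => by positivity
  simp_rw [hintegrand]
  refine (integral_norm_sum_exp_sq_le _ _ _ hU (inv_pos.mpr hK) (K ^ 2)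
    (fun p hp q hq hpq => inv_le_abs_logRatio_sub hp hq hpq) hdiam).trans ?_
  rw [inv_inv]
  have hharm : (0 : ℝ) < harmonic (K ^ 2) := by exact_mod_cast harmonic_pos (by positivity)
  exact mul_le_mul_of_nonneg_left hsubset (by positivity)

theorem two_mul_add_harmonic_sq_le {K : ℕ} (hK : 0 < K) {U ε : ℝ} (hU : 0 ≤ U) (hε : 0 < ε) :
    2 * U + 4 * K * harmonic (K ^ 2) ≤ (6 + 8 / ε) * (K : ℝ) ^ ε * (U + K) := by
  have hK1 : (1 : ℝ) ≤ K := by exact_mod_cast hK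
  have hpow : 1 ≤ (K : ℝ) ^ ε := Real.one_le_rpow hK1 hε.le
  have hlog : Real.log K ≤ (K : ℝ) ^ ε / ε := Real.log_le_rpow_div (by positivity) hε
  have hharm : (harmonic (K ^ 2) : ℝ) ≤ 1 + 2 * Real.log K := by
    have := harmonic_le_one_add_log (K ^ 2)
    rwa [Nat.cast_pow, Real.log_pow, Nat.cast_ofNat] at this
  calc 2 * U + 4 * K * harmonic (K ^ 2) ≤ 2 * U + 4 * K + 8 * K * Real.log K := by
        nlinarith [mul_le_mul_of_nonneg_left hharm (by positivity : (0 : ℝ) ≤ 4 * K)]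
    _ ≤ 2 * U + 4 * K + 8 * K * ((K : ℝ) ^ ε / ε) := by gcongr
    _ = 2 * U + 4 * K + 8 / ε * (K : ℝ) ^ ε * K := by ring
    _ ≤ (6 + 8 / ε) * (K : ℝ) ^ ε * (U + K) := by
        have hKε : (0 : ℝ) ≤ (K : ℝ) ^ ε := by positivity
        have hUε : 0 ≤ 8 / ε * (K : ℝ) ^ ε * U := by positivity
        nlinarith [mul_nonneg hU (sub_nonneg.mpr hpow), mul_nonneg hU hKε,
          mul_nonneg (Nat.cast_nonneg K) (sub_nonneg.mpr hpow), mul_nonneg (Nat.cast_nonneg K) hKε]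

/-- **Two-dimensional large sieve inequality with coprimality support.**
For every `ε > 0` there is `C_ε > 0` such that for all `U ≥ 1`, positive integers
`M, N`, and coefficients `a m n` vanishing unless `gcd(m, n) = 1`, one has
`∫_{-U}^{U} ‖∑_{n≤N} ∑_{m≤M} a m n (m/n)^{iu}‖² du
  ≤ C_ε (MN)^ε (U + MN) ∑_{m≤M} ∑_{n≤N} ‖a m n‖²`. -/
theorem large_sieve_two_dim :
    ∀ ε : ℝ, 0 < ε → ∃ C : ℝ, 0 < C ∧
      ∀ (U : ℝ), 1 ≤ U → ∀ (M N : ℕ), 0 < M → 0 < N → ∀ (a : ℕ → ℕ → ℂ),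
        (∀ m n : ℕ, Nat.gcd m n ≠ 1 → a m n = 0) →
        (∫ u in (-U)..U,
            ‖∑ n ∈ Finset.Icc 1 N, ∑ m ∈ Finset.Icc 1 M,
                a m n * ((m : ℂ) / (n : ℂ)) ^ (Complex.I * (u : ℂ))‖ ^ 2)
          ≤ C * ((M : ℝ) * N) ^ ε * (U + M * N) *
              ∑ m ∈ Finset.Icc 1 M, ∑ n ∈ Finset.Icc 1 N, ‖a m n‖ ^ 2 := by
  intro ε hε
  refine ⟨6 + 8 / ε, by positivity, fun U hU M N hM hN a ha => ?_⟩
  have hS : 0 ≤ ∑ m ∈ Icc 1 M, ∑ n ∈ Icc 1 N, ‖a m n‖ ^ 2 := by positivity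
  calc _ ≤ _ := integral_norm_sum_coprime_le (by linarith) hM hN a ha
    _ ≤ (6 + 8 / ε) * ((M * N : ℕ) : ℝ) ^ ε * (U + (M * N : ℕ)) *
          ∑ m ∈ Icc 1 M, ∑ n ∈ Icc 1 N, ‖a m n‖ ^ 2 :=
        mul_le_mul_of_nonneg_right
          (two_mul_add_harmonic_sq_le (Nat.mul_pos hM hN) (by linarith) hε) hS
    _ = _ := by push_cast; rfl
end

section
/- For every ε ∈ (0, 1/2) there exists a constant C > 0 such that for all real numbers T ≥ 2 and Δ with T^ε ≤ Δ ≤ T^{1-ε}, one has |∫_0^∞ e^{-(t-T)^2/Δ^2} · t · log t dt − √π · Δ · T · log T| ≤ C · Δ^{2+ε}. -/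
open MeasureTheory Real

set_option maxHeartbeats 1000000

private lemma le_exp_half {z : ℝ} (hz : 0 ≤ z) : z ≤ Real.exp (z / 2) := by
  have h1 : z / 4 + 1 ≤ Real.exp (z / 4) := Real.add_one_le_exp (z / 4)
  have h2 : Real.exp (z / 4) * Real.exp (z / 4) = Real.exp (z / 2) := by
    rw [← Real.exp_add]; congr 1; ring
  nlinarith [sq_nonneg (1 - z / 4), Real.exp_pos (z / 4)]

private lemma sq_mul_exp_le {a : ℝ} (ha : 0 < a) (x : ℝ) :
    x ^ 2 * Real.exp (-x ^ 2 / a) ≤ a * Real.exp (-x ^ 2 / (2 * a)) := by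
  have ha' : a ≠ 0 := ha.ne'
  have h : x ^ 2 / a ≤ Real.exp (x ^ 2 / (2 * a)) := by
    have h0 := le_exp_half (z := x ^ 2 / a) (by positivity)
    have he : x ^ 2 / a / 2 = x ^ 2 / (2 * a) := by ring
    rwa [he] at h0
  have h2 : x ^ 2 ≤ Real.exp (x ^ 2 / (2 * a)) * a := (div_le_iff₀ ha).mp h
  calc x ^ 2 * Real.exp (-x ^ 2 / a)
      ≤ Real.exp (x ^ 2 / (2 * a)) * a * Real.exp (-x ^ 2 / a) :=
        mul_le_mul_of_nonneg_right h2 (Real.exp_pos _).le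
    _ = a * (Real.exp (x ^ 2 / (2 * a)) * Real.exp (-x ^ 2 / a)) := by ring
    _ = a * Real.exp (-x ^ 2 / (2 * a)) := by
        rw [← Real.exp_add]; congr 1; field_simp; ring

private lemma exp_div_mono {a : ℝ} (ha : 0 < a) (x : ℝ) :
    Real.exp (-x ^ 2 / a) ≤ Real.exp (-x ^ 2 / (2 * a)) := by
  apply Real.exp_le_exp.mpr
  rw [neg_div, neg_div, neg_le_neg_iff, div_le_div_iff₀ (by positivity) (by positivity)]
  nlinarith [sq_nonneg x, ha]

private lemma gauss_integral {a : ℝ} (ha : 0 < a) (T : ℝ) :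
    ∫ t : ℝ, Real.exp (-(t - T) ^ 2 / a) = Real.sqrt (π * a) := by
  have h0 : (∫ t : ℝ, Real.exp (-(t - T) ^ 2 / a))
      = ∫ x : ℝ, Real.exp (-x ^ 2 / a) :=
    integral_sub_right_eq_self (fun x : ℝ => Real.exp (-x ^ 2 / a)) T
  rw [h0]
  have h1 : ∀ x : ℝ, -x ^ 2 / a = -(1 / a) * x ^ 2 := by intro x; ring
  simp_rw [h1]
  rw [integral_gaussian]
  congr 1
  field_simp

private lemma gauss_integrable {a : ℝ} (ha : 0 < a) (T : ℝ) :
    Integrable (fun t : ℝ => Real.exp (-(t - T) ^ 2 / a)) := by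
  have heq : (fun t : ℝ => Real.exp (-(t - T) ^ 2 / a))
      = fun t : ℝ => Real.exp (-(1 / a) * (t - T) ^ 2) := by
    funext t; congr 1; ring
  rw [heq]
  exact (integrable_exp_neg_mul_sq (by positivity)).comp_sub_right T

private lemma gauss_moment_one_integrable {a : ℝ} (ha : 0 < a) (T : ℝ) :
    Integrable (fun t : ℝ => (t - T) * Real.exp (-(t - T) ^ 2 / a)) := by
  have heq : (fun t : ℝ => (t - T) * Real.exp (-(t - T) ^ 2 / a))
      = fun t : ℝ => (t - T) * Real.exp (-(1 / a) * (t - T) ^ 2) := by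
    funext t; congr 2; ring
  rw [heq]
  exact (integrable_mul_exp_neg_mul_sq (by positivity)).comp_sub_right T

private lemma gauss_moment_one {a : ℝ} (ha : 0 < a) (T : ℝ) :
    ∫ t : ℝ, (t - T) * Real.exp (-(t - T) ^ 2 / a) = 0 := by
  have h0 : (∫ t : ℝ, (t - T) * Real.exp (-(t - T) ^ 2 / a))
      = ∫ x : ℝ, x * Real.exp (-x ^ 2 / a) :=
    integral_sub_right_eq_self (fun x : ℝ => x * Real.exp (-x ^ 2 / a)) T
  rw [h0]
  have hodd := integral_neg_eq_self (fun x : ℝ => x * Real.exp (-x ^ 2 / a)) volume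
  have h1 : (∫ x : ℝ, -(x * Real.exp (-x ^ 2 / a)))
      = ∫ x : ℝ, x * Real.exp (-x ^ 2 / a) := by
    have he : ∀ x : ℝ, -x * Real.exp (-(-x) ^ 2 / a) = -(x * Real.exp (-x ^ 2 / a)) := by
      intro x; rw [neg_sq]; ring
    simpa only [he] using hodd
  rw [integral_neg] at h1
  linarith

private lemma abs_log_le {r : ℝ} (hr : 1 / 2 ≤ r) : |Real.log r| ≤ 2 * |r - 1| := by
  have hr0 : 0 < r := by linarith
  rcases le_or_gt 1 r with h | h
  · rw [abs_of_nonneg (Real.log_nonneg h), abs_of_nonneg (by linarith)]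
    have := Real.log_le_sub_one_of_pos hr0
    linarith
  · rw [abs_of_nonpos (Real.log_nonpos hr0.le h.le), abs_of_neg (by linarith)]
    have h2 := Real.log_le_sub_one_of_pos (show (0:ℝ) < r⁻¹ by positivity)
    rw [Real.log_inv] at h2
    have h3 : r⁻¹ - 1 = (1 - r) / r := by field_simp
    have h4 : (1 - r) / r ≤ 2 * (1 - r) := by
      rw [div_le_iff₀ hr0]; nlinarith
    linarith

private lemma taylor_log_bound {T t : ℝ} (hT : 2 ≤ T) (h1 : T / 2 ≤ t) (h2 : t ≤ 3 * T / 2) :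
    |t * Real.log t - (T * Real.log T + (1 + Real.log T) * (t - T))|
      ≤ 2 / T * (t - T) ^ 2 := by
  have hT0 : 0 < T := by linarith
  have hmin : T / 2 ≤ min t T := le_min h1 (by linarith)
  have hderiv : ∀ u ∈ Set.Icc (min t T) (max t T),
      HasDerivWithinAt (fun y => y * Real.log y - (1 + Real.log T) * y)
        (Real.log u - Real.log T) (Set.Icc (min t T) (max t T)) u := by
    intro u hu
    have hu2 : T / 2 ≤ u := le_trans hmin hu.1
    have hu0 : u ≠ 0 := ne_of_gt (by linarith)
    have hd := (Real.hasDerivAt_mul_log hu0).sub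
      ((hasDerivAt_id u).const_mul (1 + Real.log T))
    have he : Real.log u + 1 - (1 + Real.log T) * 1 = Real.log u - Real.log T := by ring
    rw [he] at hd
    exact hd.hasDerivWithinAt
  have hbound : ∀ u ∈ Set.Icc (min t T) (max t T),
      ‖Real.log u - Real.log T‖ ≤ 2 / T * |t - T| := by
    intro u hu
    have hu2 : T / 2 ≤ u := le_trans hmin hu.1
    have hu0 : 0 < u := by linarith
    have habs : |u - T| ≤ |t - T| := by
      rcases le_total t T with h | h
      · rw [min_eq_left h, max_eq_right h] at hu
        rw [abs_of_nonpos (by linarith [hu.2] : u - T ≤ 0),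
          abs_of_nonpos (by linarith : t - T ≤ 0)]
        linarith [hu.1]
      · rw [min_eq_right h, max_eq_left h] at hu
        rw [abs_of_nonneg (by linarith [hu.1] : (0:ℝ) ≤ u - T),
          abs_of_nonneg (by linarith : (0:ℝ) ≤ t - T)]
        linarith [hu.2]
    have hr : 1 / 2 ≤ u / T := by rw [le_div_iff₀ hT0]; linarith
    have hlog := abs_log_le hr
    rw [show u / T - 1 = (u - T) / T by field_simp] at hlog
    rw [Real.log_div (ne_of_gt hu0) (ne_of_gt hT0)] at hlog
    rw [abs_div, abs_of_pos hT0] at hlog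
    rw [Real.norm_eq_abs]
    calc |Real.log u - Real.log T| ≤ 2 * (|u - T| / T) := hlog
      _ ≤ 2 * (|t - T| / T) := by gcongr
      _ = 2 / T * |t - T| := by ring
  have hmvt := Convex.norm_image_sub_le_of_norm_hasDerivWithin_le hderiv hbound
    (convex_Icc _ _) (Set.mem_Icc.mpr ⟨min_le_right t T, le_max_right t T⟩)
    (Set.mem_Icc.mpr ⟨min_le_left t T, le_max_left t T⟩)
  simp only [Real.norm_eq_abs] at hmvt
  have he : t * Real.log t - (1 + Real.log T) * t
      - (T * Real.log T - (1 + Real.log T) * T)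
      = t * Real.log t - (T * Real.log T + (1 + Real.log T) * (t - T)) := by ring
  rw [he] at hmvt
  calc |t * Real.log t - (T * Real.log T + (1 + Real.log T) * (t - T))|
      ≤ 2 / T * |t - T| * |t - T| := hmvt
    _ = 2 / T * (t - T) ^ 2 := by
        rw [mul_assoc, abs_mul_abs_self]; ring

private lemma mul_abs_log_le {t : ℝ} (ht : 0 < t) : t * |Real.log t| ≤ 1 + t ^ 2 := by
  rcases le_or_gt 1 t with h | h
  · rw [abs_of_nonneg (Real.log_nonneg h)]
    have := Real.log_le_sub_one_of_pos ht
    nlinarith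
  · rw [abs_of_nonpos (Real.log_nonpos ht.le h.le)]
    have h2 := Real.log_le_sub_one_of_pos (show (0:ℝ) < t⁻¹ by positivity)
    rw [Real.log_inv] at h2
    have h3 : t * (t⁻¹ - 1) = 1 - t := by field_simp
    nlinarith

private lemma exp_decay {ε T Δ : ℝ} (hε0 : 0 < ε) (hε1 : ε < 1) (hT : 2 ≤ T)
    (hΔ0 : 0 < Δ) (hΔ2 : Δ ≤ T ^ (1 - ε)) :
    Real.exp (-T ^ 2 / (8 * Δ ^ 2)) * T ^ 2 ≤ Real.exp (2 / ε ^ 2) := by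
  have hT0 : (0:ℝ) < T := by linarith
  set L := Real.log T with hL
  have hL0 : 0 < L := Real.log_pos (by linarith)
  have h1 : T ^ ε ≤ T / Δ := by
    rw [Real.rpow_def_of_pos hT0] at hΔ2 ⊢
    rw [le_div_iff₀ hΔ0]
    calc Real.exp (L * ε) * Δ ≤ Real.exp (L * ε) * Real.exp (L * (1 - ε)) :=
          mul_le_mul_of_nonneg_left hΔ2 (Real.exp_pos _).le
      _ = Real.exp (L * 1) := by rw [← Real.exp_add]; congr 1; ring
      _ = T := by rw [mul_one, hL, Real.exp_log hT0]
  have hTε : (0:ℝ) < T ^ ε := Real.rpow_pos_of_pos hT0 ε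
  have h2 : (T ^ ε) ^ 2 ≤ T ^ 2 / Δ ^ 2 := by
    rw [show T ^ 2 / Δ ^ 2 = (T / Δ) ^ 2 by rw [div_pow]]
    exact pow_le_pow_left₀ hTε.le h1 2
  have h3 : (2 * ε * L) ^ 2 ≤ (T ^ ε) ^ 2 := by
    have hz : (0:ℝ) ≤ 2 * ε * L := by positivity
    have h4 : 2 * ε * L ≤ Real.exp (2 * ε * L / 2) := le_exp_half hz
    have h5 : T ^ ε = Real.exp (ε * L) := by
      rw [Real.rpow_def_of_pos hT0]; congr 1; ring
    have h6 : Real.exp (2 * ε * L / 2) = Real.exp (ε * L) := by congr 1; ring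
    rw [h6] at h4
    rw [h5]
    exact pow_le_pow_left₀ hz h4 2
  have h7 : ε ^ 2 * L ^ 2 / 2 ≤ T ^ 2 / (8 * Δ ^ 2) := by
    have he : (2 * ε * L) ^ 2 = 4 * (ε ^ 2 * L ^ 2) := by ring
    rw [he] at h3
    have h8 : 4 * (ε ^ 2 * L ^ 2) ≤ T ^ 2 / Δ ^ 2 := le_trans h3 h2
    rw [show T ^ 2 / (8 * Δ ^ 2) = T ^ 2 / Δ ^ 2 / 8 by ring]
    linarith
  have hT2 : T ^ 2 = Real.exp (2 * L) := by
    have he : T = Real.exp L := (Real.exp_log hT0).symm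
    calc T ^ 2 = Real.exp L * Real.exp L := by rw [← he]; ring
      _ = Real.exp (2 * L) := by rw [← Real.exp_add]; congr 1; ring
  have hkey : 2 * L - ε ^ 2 * L ^ 2 / 2 ≤ 2 / ε ^ 2 := by
    have hp : 0 ≤ (ε ^ 2 * L - 2) ^ 2 / (2 * ε ^ 2) := by positivity
    have heq : 2 / ε ^ 2 - (2 * L - ε ^ 2 * L ^ 2 / 2)
        = (ε ^ 2 * L - 2) ^ 2 / (2 * ε ^ 2) := by
      field_simp
      ring
    linarith [heq ▸ hp]
  calc Real.exp (-T ^ 2 / (8 * Δ ^ 2)) * T ^ 2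
      = Real.exp (-T ^ 2 / (8 * Δ ^ 2) + 2 * L) := by rw [hT2, ← Real.exp_add]
    _ ≤ Real.exp (2 / ε ^ 2) := by
        apply Real.exp_le_exp.mpr
        have h9 : -T ^ 2 / (8 * Δ ^ 2) ≤ -(ε ^ 2 * L ^ 2 / 2) := by
          rw [neg_div]; linarith
        linarith

private lemma pointwise_bound {T Δ : ℝ} (hT : 2 ≤ T) (hΔ1 : 1 ≤ Δ) (t : ℝ) :
    |Set.indicator (Set.Ioi 0)
        (fun u => Real.exp (-(u - T) ^ 2 / Δ ^ 2) * u * Real.log u) t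
      - Real.exp (-(t - T) ^ 2 / Δ ^ 2) * (T * Real.log T + (1 + Real.log T) * (t - T))|
    ≤ (2 * Δ ^ 2 / T + 5 * Real.exp (-T ^ 2 / (8 * Δ ^ 2)) * T ^ 2)
        * Real.exp (-(t - T) ^ 2 / (2 * Δ ^ 2))
      + 10 * Δ ^ 2 * Real.exp (-T ^ 2 / (8 * Δ ^ 2))
        * Real.exp (-(t - T) ^ 2 / (4 * Δ ^ 2)) := by
  have hΔ0 : 0 < Δ := by linarith
  have hT0 : 0 < T := by linarith
  by_cases hin : T / 2 ≤ t ∧ t ≤ 3 * T / 2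
  · obtain ⟨h1, h2⟩ := hin
    have ht0 : 0 < t := by linarith
    rw [Set.indicator_of_mem (Set.mem_Ioi.mpr ht0)]
    have hfg : Real.exp (-(t - T) ^ 2 / Δ ^ 2) * t * Real.log t
        - Real.exp (-(t - T) ^ 2 / Δ ^ 2) * (T * Real.log T + (1 + Real.log T) * (t - T))
        = Real.exp (-(t - T) ^ 2 / Δ ^ 2)
          * (t * Real.log t - (T * Real.log T + (1 + Real.log T) * (t - T))) := by ring
    rw [hfg, abs_mul, abs_of_pos (Real.exp_pos _)]
    have hψ := taylor_log_bound hT h1 h2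
    have hsq := sq_mul_exp_le (a := Δ ^ 2) (by positivity) (t - T)
    have hA : (0:ℝ) ≤ 5 * Real.exp (-T ^ 2 / (8 * Δ ^ 2)) * T ^ 2
        * Real.exp (-(t - T) ^ 2 / (2 * Δ ^ 2)) := by positivity
    have hB : (0:ℝ) ≤ 10 * Δ ^ 2 * Real.exp (-T ^ 2 / (8 * Δ ^ 2))
        * Real.exp (-(t - T) ^ 2 / (4 * Δ ^ 2)) := by positivity
    calc Real.exp (-(t - T) ^ 2 / Δ ^ 2)
          * |t * Real.log t - (T * Real.log T + (1 + Real.log T) * (t - T))|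
        ≤ Real.exp (-(t - T) ^ 2 / Δ ^ 2) * (2 / T * (t - T) ^ 2) :=
          mul_le_mul_of_nonneg_left hψ (Real.exp_pos _).le
      _ = 2 / T * ((t - T) ^ 2 * Real.exp (-(t - T) ^ 2 / Δ ^ 2)) := by ring
      _ ≤ 2 / T * (Δ ^ 2 * Real.exp (-(t - T) ^ 2 / (2 * Δ ^ 2))) := by
          apply mul_le_mul_of_nonneg_left hsq (by positivity)
      _ = 2 * Δ ^ 2 / T * Real.exp (-(t - T) ^ 2 / (2 * Δ ^ 2)) := by ring
      _ ≤ (2 * Δ ^ 2 / T + 5 * Real.exp (-T ^ 2 / (8 * Δ ^ 2)) * T ^ 2)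
            * Real.exp (-(t - T) ^ 2 / (2 * Δ ^ 2))
          + 10 * Δ ^ 2 * Real.exp (-T ^ 2 / (8 * Δ ^ 2))
            * Real.exp (-(t - T) ^ 2 / (4 * Δ ^ 2)) := by nlinarith [hA, hB]
  · push_neg at hin
    have hx2 : T ^ 2 / 4 ≤ (t - T) ^ 2 := by
      rcases lt_or_ge t (T / 2) with h | h
      · nlinarith
      · have := hin h; nlinarith
    have hφE : Real.exp (-(t - T) ^ 2 / Δ ^ 2)
        ≤ Real.exp (-T ^ 2 / (8 * Δ ^ 2)) * Real.exp (-(t - T) ^ 2 / (2 * Δ ^ 2)) := by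
      have hsplit : Real.exp (-(t - T) ^ 2 / Δ ^ 2)
          = Real.exp (-(t - T) ^ 2 / (2 * Δ ^ 2)) * Real.exp (-(t - T) ^ 2 / (2 * Δ ^ 2)) := by
        rw [← Real.exp_add]; congr 1; field_simp; ring
      rw [hsplit]
      apply mul_le_mul_of_nonneg_right _ (Real.exp_pos _).le
      apply Real.exp_le_exp.mpr
      rw [neg_div, neg_div, neg_le_neg_iff, div_le_div_iff₀ (by positivity) (by positivity)]
      nlinarith [hx2]
    have hsqE2' := sq_mul_exp_le (a := 2 * Δ ^ 2) (by positivity) (t - T)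
    rw [show 2 * (2 * Δ ^ 2) = 4 * Δ ^ 2 by ring] at hsqE2'
    have hind : |Set.indicator (Set.Ioi 0)
          (fun u => Real.exp (-(u - T) ^ 2 / Δ ^ 2) * u * Real.log u) t|
        ≤ Real.exp (-(t - T) ^ 2 / Δ ^ 2) * (1 + 2 * T ^ 2 + 2 * (t - T) ^ 2) := by
      rcases le_or_gt t 0 with h | h
      · rw [Set.indicator_of_notMem (by simpa using h)]
        rw [abs_zero]
        positivity
      · rw [Set.indicator_of_mem (Set.mem_Ioi.mpr h)]
        rw [abs_mul, abs_mul, abs_of_pos (Real.exp_pos _), abs_of_pos h]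
        have hlb := mul_abs_log_le h
        have ht2 : 1 + t ^ 2 ≤ 1 + 2 * T ^ 2 + 2 * (t - T) ^ 2 := by
          nlinarith [sq_nonneg (t - 2 * T)]
        calc Real.exp (-(t - T) ^ 2 / Δ ^ 2) * t * |Real.log t|
            = Real.exp (-(t - T) ^ 2 / Δ ^ 2) * (t * |Real.log t|) := by ring
          _ ≤ Real.exp (-(t - T) ^ 2 / Δ ^ 2) * (1 + t ^ 2) :=
              mul_le_mul_of_nonneg_left hlb (Real.exp_pos _).le
          _ ≤ Real.exp (-(t - T) ^ 2 / Δ ^ 2) * (1 + 2 * T ^ 2 + 2 * (t - T) ^ 2) :=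
              mul_le_mul_of_nonneg_left ht2 (Real.exp_pos _).le
    have hg : |Real.exp (-(t - T) ^ 2 / Δ ^ 2)
          * (T * Real.log T + (1 + Real.log T) * (t - T))|
        ≤ Real.exp (-(t - T) ^ 2 / Δ ^ 2) * (T ^ 2 + T * |t - T|) := by
      rw [abs_mul, abs_of_pos (Real.exp_pos _)]
      apply mul_le_mul_of_nonneg_left _ (Real.exp_pos _).le
      have hlog0 : 0 ≤ Real.log T := Real.log_nonneg (by linarith)
      have hlogT : Real.log T ≤ T - 1 := Real.log_le_sub_one_of_pos hT0
      calc |T * Real.log T + (1 + Real.log T) * (t - T)|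
          ≤ |T * Real.log T| + |(1 + Real.log T) * (t - T)| := abs_add_le _ _
        _ = T * Real.log T + (1 + Real.log T) * |t - T| := by
            rw [abs_mul, abs_mul, abs_of_nonneg (by linarith : (0:ℝ) ≤ 1 + Real.log T),
              abs_of_nonneg hT0.le, abs_of_nonneg hlog0]
        _ ≤ T ^ 2 + T * |t - T| := by nlinarith [abs_nonneg (t - T)]
    have hsum : 1 + 2 * T ^ 2 + 2 * (t - T) ^ 2 + (T ^ 2 + T * |t - T|)
        ≤ 5 * T ^ 2 + 5 * (t - T) ^ 2 := by
      have hTx : T * |t - T| ≤ T ^ 2 / 2 + (t - T) ^ 2 / 2 := by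
        nlinarith [sq_nonneg (T - |t - T|), sq_abs (t - T)]
      nlinarith
    have hx2φ : (t - T) ^ 2 * Real.exp (-(t - T) ^ 2 / Δ ^ 2)
        ≤ Real.exp (-T ^ 2 / (8 * Δ ^ 2))
          * (2 * Δ ^ 2 * Real.exp (-(t - T) ^ 2 / (4 * Δ ^ 2))) := by
      calc (t - T) ^ 2 * Real.exp (-(t - T) ^ 2 / Δ ^ 2)
          ≤ (t - T) ^ 2 * (Real.exp (-T ^ 2 / (8 * Δ ^ 2))
              * Real.exp (-(t - T) ^ 2 / (2 * Δ ^ 2))) :=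
            mul_le_mul_of_nonneg_left hφE (sq_nonneg _)
        _ = Real.exp (-T ^ 2 / (8 * Δ ^ 2))
              * ((t - T) ^ 2 * Real.exp (-(t - T) ^ 2 / (2 * Δ ^ 2))) := by ring
        _ ≤ Real.exp (-T ^ 2 / (8 * Δ ^ 2))
              * (2 * Δ ^ 2 * Real.exp (-(t - T) ^ 2 / (4 * Δ ^ 2))) :=
            mul_le_mul_of_nonneg_left hsqE2' (Real.exp_pos _).le
    have hTφ : T ^ 2 * Real.exp (-(t - T) ^ 2 / Δ ^ 2)
        ≤ T ^ 2 * (Real.exp (-T ^ 2 / (8 * Δ ^ 2))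
            * Real.exp (-(t - T) ^ 2 / (2 * Δ ^ 2))) :=
      mul_le_mul_of_nonneg_left hφE (by positivity)
    have h0 : (0:ℝ) ≤ 2 * Δ ^ 2 / T * Real.exp (-(t - T) ^ 2 / (2 * Δ ^ 2)) := by positivity
    calc |Set.indicator (Set.Ioi 0)
            (fun u => Real.exp (-(u - T) ^ 2 / Δ ^ 2) * u * Real.log u) t
          - Real.exp (-(t - T) ^ 2 / Δ ^ 2)
              * (T * Real.log T + (1 + Real.log T) * (t - T))|
        ≤ |Set.indicator (Set.Ioi 0)
            (fun u => Real.exp (-(u - T) ^ 2 / Δ ^ 2) * u * Real.log u) t|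
          + |Real.exp (-(t - T) ^ 2 / Δ ^ 2)
              * (T * Real.log T + (1 + Real.log T) * (t - T))| := abs_sub _ _
      _ ≤ Real.exp (-(t - T) ^ 2 / Δ ^ 2) * (1 + 2 * T ^ 2 + 2 * (t - T) ^ 2)
          + Real.exp (-(t - T) ^ 2 / Δ ^ 2) * (T ^ 2 + T * |t - T|) := add_le_add hind hg
      _ = Real.exp (-(t - T) ^ 2 / Δ ^ 2)
            * (1 + 2 * T ^ 2 + 2 * (t - T) ^ 2 + (T ^ 2 + T * |t - T|)) := by ring
      _ ≤ Real.exp (-(t - T) ^ 2 / Δ ^ 2) * (5 * T ^ 2 + 5 * (t - T) ^ 2) :=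
          mul_le_mul_of_nonneg_left hsum (Real.exp_pos _).le
      _ = 5 * (T ^ 2 * Real.exp (-(t - T) ^ 2 / Δ ^ 2))
          + 5 * ((t - T) ^ 2 * Real.exp (-(t - T) ^ 2 / Δ ^ 2)) := by ring
      _ ≤ 5 * (T ^ 2 * (Real.exp (-T ^ 2 / (8 * Δ ^ 2))
              * Real.exp (-(t - T) ^ 2 / (2 * Δ ^ 2))))
          + 5 * (Real.exp (-T ^ 2 / (8 * Δ ^ 2))
              * (2 * Δ ^ 2 * Real.exp (-(t - T) ^ 2 / (4 * Δ ^ 2)))) := by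
          have := mul_le_mul_of_nonneg_left hx2φ (by norm_num : (0:ℝ) ≤ 5)
          have := mul_le_mul_of_nonneg_left hTφ (by norm_num : (0:ℝ) ≤ 5)
          linarith
      _ ≤ (2 * Δ ^ 2 / T + 5 * Real.exp (-T ^ 2 / (8 * Δ ^ 2)) * T ^ 2)
            * Real.exp (-(t - T) ^ 2 / (2 * Δ ^ 2))
          + 10 * Δ ^ 2 * Real.exp (-T ^ 2 / (8 * Δ ^ 2))
            * Real.exp (-(t - T) ^ 2 / (4 * Δ ^ 2)) := by linarith

/-- Asymptotic evaluation of `H_{T,Δ}^{log} = ∫_0^∞ e^{-(t-T)²/Δ²} t log t dt`: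
for every `ε ∈ (0, 1/2)` there exists `C > 0` such that for all `T ≥ 2` and
`T^ε ≤ Δ ≤ T^{1-ε}`, we have `|H_{T,Δ}^{log} - √π Δ T log T| ≤ C Δ^{2+ε}`. -/
theorem gaussian_log_mass_asymptotic :
    ∀ ε : ℝ, ε ∈ Set.Ioo (0 : ℝ) (1/2) →
      ∃ C : ℝ, 0 < C ∧ ∀ T Δ : ℝ, 2 ≤ T → T ^ ε ≤ Δ → Δ ≤ T ^ (1 - ε) →
        |(∫ t in Set.Ioi (0 : ℝ), Real.exp (-(t - T) ^ 2 / Δ ^ 2) * t * Real.log t)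
            - Real.sqrt π * Δ * T * Real.log T| ≤ C * Δ ^ ((2 : ℝ) + ε) := by
  intro ε hε
  obtain ⟨hε0, hεh⟩ := hε
  have hε1 : ε < 1 := by linarith
  refine ⟨100 * Real.exp (2 / ε ^ 2), by positivity, ?_⟩
  intro T Δ hT hΔl hΔu
  have hT0 : (0:ℝ) < T := by linarith
  have hT1 : (1:ℝ) ≤ T := by linarith
  have hΔ1 : (1:ℝ) ≤ Δ := le_trans (Real.one_le_rpow hT1 hε0.le) hΔl
  have hΔ0 : (0:ℝ) < Δ := by linarith
  have hΔT : Δ ≤ T := by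
    calc Δ ≤ T ^ (1 - ε) := hΔu
      _ ≤ T ^ (1:ℝ) := Real.rpow_le_rpow_of_exponent_le hT1 (by linarith)
      _ = T := Real.rpow_one T
  have ha1 : (0:ℝ) < Δ ^ 2 := by positivity
  have ha2 : (0:ℝ) < 2 * Δ ^ 2 := by positivity
  have ha4 : (0:ℝ) < 4 * Δ ^ 2 := by positivity
  -- Gaussian integrals
  have hIφ : ∫ t : ℝ, Real.exp (-(t - T) ^ 2 / Δ ^ 2) = Real.sqrt π * Δ := by
    rw [gauss_integral ha1 T, Real.sqrt_mul (le_of_lt Real.pi_pos), Real.sqrt_sq hΔ0.le]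
  have hIE2 : ∫ t : ℝ, Real.exp (-(t - T) ^ 2 / (2 * Δ ^ 2)) ≤ 3 * Δ := by
    rw [gauss_integral ha2 T]
    have h1 : π * (2 * Δ ^ 2) ≤ (3 * Δ) ^ 2 := by nlinarith [Real.pi_le_four, sq_nonneg Δ]
    calc Real.sqrt (π * (2 * Δ ^ 2)) ≤ Real.sqrt ((3 * Δ) ^ 2) := Real.sqrt_le_sqrt h1
      _ = 3 * Δ := Real.sqrt_sq (by positivity)
  have hIE4 : ∫ t : ℝ, Real.exp (-(t - T) ^ 2 / (4 * Δ ^ 2)) ≤ 4 * Δ := by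
    rw [gauss_integral ha4 T]
    have h1 : π * (4 * Δ ^ 2) ≤ (4 * Δ) ^ 2 := by nlinarith [Real.pi_le_four, sq_nonneg Δ]
    calc Real.sqrt (π * (4 * Δ ^ 2)) ≤ Real.sqrt ((4 * Δ) ^ 2) := Real.sqrt_le_sqrt h1
      _ = 4 * Δ := Real.sqrt_sq (by positivity)
  have hIodd := gauss_moment_one ha1 T
  -- Integrability
  have hφInt := gauss_integrable ha1 T
  have hE2Int := gauss_integrable ha2 T
  have hE4Int := gauss_integrable ha4 T
  have hxφInt := gauss_moment_one_integrable ha1 T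
  have hgeq : (fun t : ℝ => Real.exp (-(t - T) ^ 2 / Δ ^ 2)
      * (T * Real.log T + (1 + Real.log T) * (t - T)))
      = fun t : ℝ => T * Real.log T * Real.exp (-(t - T) ^ 2 / Δ ^ 2)
        + (1 + Real.log T) * ((t - T) * Real.exp (-(t - T) ^ 2 / Δ ^ 2)) := by
    funext t; ring
  have hgInt : Integrable (fun t : ℝ => Real.exp (-(t - T) ^ 2 / Δ ^ 2)
      * (T * Real.log T + (1 + Real.log T) * (t - T))) := by
    rw [hgeq]
    exact (hφInt.const_mul _).add (hxφInt.const_mul _)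
  have hIg : (∫ t : ℝ, Real.exp (-(t - T) ^ 2 / Δ ^ 2)
      * (T * Real.log T + (1 + Real.log T) * (t - T)))
      = Real.sqrt π * Δ * T * Real.log T := by
    rw [hgeq]
    rw [integral_add (hφInt.const_mul _) (hxφInt.const_mul _),
      integral_const_mul, integral_const_mul, hIφ, hIodd]
    ring
  -- Indicator function integrability
  have hfmeas : AEStronglyMeasurable (Set.indicator (Set.Ioi (0:ℝ))
      (fun u => Real.exp (-(u - T) ^ 2 / Δ ^ 2) * u * Real.log u)) volume := by
    apply (Measurable.indicator _ measurableSet_Ioi).aestronglyMeasurable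
    exact ((Real.measurable_exp.comp
      ((((measurable_id.sub_const T).pow_const 2).neg).div_const (Δ ^ 2))).mul
      measurable_id).mul Real.measurable_log
  have hindInt : Integrable (Set.indicator (Set.Ioi (0:ℝ))
      (fun u => Real.exp (-(u - T) ^ 2 / Δ ^ 2) * u * Real.log u)) := by
    apply Integrable.mono' (hE2Int.const_mul (1 + 2 * T ^ 2 + 2 * Δ ^ 2)) hfmeas
    filter_upwards with t
    rw [Real.norm_eq_abs]
    rcases le_or_gt t 0 with h | h
    · rw [Set.indicator_of_notMem (by simpa using h), abs_zero]
      positivity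
    · rw [Set.indicator_of_mem (Set.mem_Ioi.mpr h)]
      rw [abs_mul, abs_mul, abs_of_pos (Real.exp_pos _), abs_of_pos h]
      have hml := mul_abs_log_le h
      have hsq := sq_mul_exp_le (a := Δ ^ 2) ha1 (t - T)
      have hmono := exp_div_mono (a := Δ ^ 2) ha1 (t - T)
      calc Real.exp (-(t - T) ^ 2 / Δ ^ 2) * t * |Real.log t|
          = Real.exp (-(t - T) ^ 2 / Δ ^ 2) * (t * |Real.log t|) := by ring
        _ ≤ Real.exp (-(t - T) ^ 2 / Δ ^ 2) * (1 + t ^ 2) :=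
            mul_le_mul_of_nonneg_left hml (Real.exp_pos _).le
        _ ≤ Real.exp (-(t - T) ^ 2 / Δ ^ 2) * (1 + 2 * T ^ 2 + 2 * (t - T) ^ 2) :=
            mul_le_mul_of_nonneg_left (by nlinarith [sq_nonneg (t - 2 * T)])
              (Real.exp_pos _).le
        _ = (1 + 2 * T ^ 2) * Real.exp (-(t - T) ^ 2 / Δ ^ 2)
            + 2 * ((t - T) ^ 2 * Real.exp (-(t - T) ^ 2 / Δ ^ 2)) := by ring
        _ ≤ (1 + 2 * T ^ 2) * Real.exp (-(t - T) ^ 2 / (2 * Δ ^ 2))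
            + 2 * (Δ ^ 2 * Real.exp (-(t - T) ^ 2 / (2 * Δ ^ 2))) :=
            add_le_add (mul_le_mul_of_nonneg_left hmono (by positivity))
              (mul_le_mul_of_nonneg_left hsq (by norm_num))
        _ = (1 + 2 * T ^ 2 + 2 * Δ ^ 2) * Real.exp (-(t - T) ^ 2 / (2 * Δ ^ 2)) := by ring
  -- main estimate
  set c1 : ℝ := 2 * Δ ^ 2 / T + 5 * Real.exp (-T ^ 2 / (8 * Δ ^ 2)) * T ^ 2 with hc1
  set c2 : ℝ := 10 * Δ ^ 2 * Real.exp (-T ^ 2 / (8 * Δ ^ 2)) with hc2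
  have hc1nn : 0 ≤ c1 := by rw [hc1]; positivity
  have hc2nn : 0 ≤ c2 := by rw [hc2]; positivity
  have hIind : (∫ t in Set.Ioi (0:ℝ), Real.exp (-(t - T) ^ 2 / Δ ^ 2) * t * Real.log t)
      = ∫ t : ℝ, Set.indicator (Set.Ioi (0:ℝ))
        (fun u => Real.exp (-(u - T) ^ 2 / Δ ^ 2) * u * Real.log u) t :=
    (integral_indicator measurableSet_Ioi).symm
  have hDInt : Integrable (fun t : ℝ =>
      c1 * Real.exp (-(t - T) ^ 2 / (2 * Δ ^ 2))
        + c2 * Real.exp (-(t - T) ^ 2 / (4 * Δ ^ 2))) :=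
    (hE2Int.const_mul _).add (hE4Int.const_mul _)
  have hmain : |(∫ t in Set.Ioi (0:ℝ), Real.exp (-(t - T) ^ 2 / Δ ^ 2) * t * Real.log t)
      - Real.sqrt π * Δ * T * Real.log T|
      ≤ c1 * (3 * Δ) + c2 * (4 * Δ) := by
    rw [hIind, ← hIg, ← integral_sub hindInt hgInt]
    calc |∫ t : ℝ, (Set.indicator (Set.Ioi (0:ℝ))
            (fun u => Real.exp (-(u - T) ^ 2 / Δ ^ 2) * u * Real.log u) t
          - Real.exp (-(t - T) ^ 2 / Δ ^ 2)
              * (T * Real.log T + (1 + Real.log T) * (t - T)))|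
        ≤ ∫ t : ℝ, |Set.indicator (Set.Ioi (0:ℝ))
            (fun u => Real.exp (-(u - T) ^ 2 / Δ ^ 2) * u * Real.log u) t
          - Real.exp (-(t - T) ^ 2 / Δ ^ 2)
              * (T * Real.log T + (1 + Real.log T) * (t - T))| := by
          simpa [Real.norm_eq_abs] using norm_integral_le_integral_norm
            (fun t : ℝ => Set.indicator (Set.Ioi (0:ℝ))
              (fun u => Real.exp (-(u - T) ^ 2 / Δ ^ 2) * u * Real.log u) t
              - Real.exp (-(t - T) ^ 2 / Δ ^ 2)
                * (T * Real.log T + (1 + Real.log T) * (t - T)))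
      _ ≤ ∫ t : ℝ, (c1 * Real.exp (-(t - T) ^ 2 / (2 * Δ ^ 2))
            + c2 * Real.exp (-(t - T) ^ 2 / (4 * Δ ^ 2))) := by
          apply integral_mono ((hindInt.sub hgInt).abs) hDInt
          intro t
          exact pointwise_bound hT hΔ1 t
      _ = c1 * (∫ t : ℝ, Real.exp (-(t - T) ^ 2 / (2 * Δ ^ 2)))
          + c2 * (∫ t : ℝ, Real.exp (-(t - T) ^ 2 / (4 * Δ ^ 2))) := by
          rw [integral_add (hE2Int.const_mul _) (hE4Int.const_mul _),
            integral_const_mul, integral_const_mul]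
      _ ≤ c1 * (3 * Δ) + c2 * (4 * Δ) :=
          add_le_add (mul_le_mul_of_nonneg_left hIE2 hc1nn)
            (mul_le_mul_of_nonneg_left hIE4 hc2nn)
  -- now the numeric endgame
  have hdecay := exp_decay hε0 hε1 hT hΔ0 hΔu
  set e : ℝ := Real.exp (-T ^ 2 / (8 * Δ ^ 2)) with he
  set P : ℝ := Δ ^ ((2:ℝ) + ε) with hP
  set K : ℝ := Real.exp (2 / ε ^ 2) with hK
  have hK1 : (1:ℝ) ≤ K := by
    rw [hK]; exact Real.one_le_exp (by positivity)
  have hPnn : 0 ≤ P := by rw [hP]; positivity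
  have henn : 0 ≤ e := by rw [he]; positivity
  have hΔP : Δ ≤ P := by
    rw [hP]
    calc Δ = Δ ^ (1:ℝ) := (Real.rpow_one Δ).symm
      _ ≤ Δ ^ ((2:ℝ) + ε) := Real.rpow_le_rpow_of_exponent_le hΔ1 (by linarith)
  have hpow : Δ ^ 3 ≤ T * P := by
    have h1 : Δ ^ ((1:ℝ) - ε) ≤ T := by
      calc Δ ^ ((1:ℝ) - ε) ≤ (T ^ ((1:ℝ) - ε)) ^ ((1:ℝ) - ε) :=
            Real.rpow_le_rpow hΔ0.le hΔu (by linarith)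
        _ = T ^ (((1:ℝ) - ε) * ((1:ℝ) - ε)) := (Real.rpow_mul hT0.le _ _).symm
        _ ≤ T ^ (1:ℝ) := Real.rpow_le_rpow_of_exponent_le hT1 (by nlinarith)
        _ = T := Real.rpow_one T
    have h2 : (Δ:ℝ) ^ ((3:ℝ)) = Δ ^ ((2:ℝ) + ε) * Δ ^ ((1:ℝ) - ε) := by
      rw [← Real.rpow_add hΔ0]; norm_num
    have h3 : (Δ:ℝ) ^ (3:ℕ) = Δ ^ ((3:ℝ)) := by
      rw [← Real.rpow_natCast Δ 3]; norm_num
    calc Δ ^ 3 = Δ ^ ((2:ℝ) + ε) * Δ ^ ((1:ℝ) - ε) := by rw [h3, h2]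
      _ ≤ Δ ^ ((2:ℝ) + ε) * T := by
          apply mul_le_mul_of_nonneg_left h1 (by positivity)
      _ = T * P := by rw [hP]; ring
  have hA1 : 2 * Δ ^ 2 / T * (3 * Δ) ≤ 6 * P := by
    rw [div_mul_eq_mul_div, div_le_iff₀ hT0]
    calc 2 * Δ ^ 2 * (3 * Δ) = 6 * Δ ^ 3 := by ring
      _ ≤ 6 * (T * P) := by linarith
      _ = 6 * P * T := by ring
  have hB1 : e * T ^ 2 * Δ ≤ K * Δ := by
    exact mul_le_mul_of_nonneg_right hdecay hΔ0.le
  have hB2 : K * Δ ≤ K * P := mul_le_mul_of_nonneg_left hΔP (by linarith)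
  have hB3 : Δ ^ 3 * e ≤ T ^ 2 * Δ * e := by
    apply mul_le_mul_of_nonneg_right _ henn
    calc Δ ^ 3 = Δ ^ 2 * Δ := by ring
      _ ≤ T ^ 2 * Δ := by
          apply mul_le_mul_of_nonneg_right _ hΔ0.le
          nlinarith
  have hB5 : (0:ℝ) ≤ K * P := by positivity
  calc |(∫ t in Set.Ioi (0:ℝ), Real.exp (-(t - T) ^ 2 / Δ ^ 2) * t * Real.log t)
      - Real.sqrt π * Δ * T * Real.log T|
      ≤ c1 * (3 * Δ) + c2 * (4 * Δ) := hmain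
    _ = 2 * Δ ^ 2 / T * (3 * Δ) + 15 * (e * T ^ 2 * Δ) + 40 * (Δ ^ 2 * e * Δ) := by
        rw [hc1, hc2]; ring
    _ ≤ 6 * P + 15 * (K * Δ) + 40 * (T ^ 2 * Δ * e) := by
        have h40 : Δ ^ 2 * e * Δ = Δ ^ 3 * e := by ring
        rw [h40]
        linarith
    _ ≤ 6 * P + 15 * (K * P) + 40 * (K * P) := by
        have h41 : T ^ 2 * Δ * e = e * T ^ 2 * Δ := by ring
        rw [h41]
        have := hB1.trans hB2
        linarith
    _ ≤ 100 * K * P := by nlinarith [hPnn, hK1]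
    _ = 100 * Real.exp (2 / ε ^ 2) * Δ ^ ((2:ℝ) + ε) := by rw [hK, hP]
end

section
/- Let c be a positive integer and let x₁, x₂ be integers. Define G(x₁, x₂; c) = c^{-3} ∑_{a=0}^{c-1} ∑_{b=0}^{c-1} S(a, b²; c) e((a x₁ + b x₂)/c). If gcd(x₁, c) > 1 then G(x₁, x₂; c) = 0, while if gcd(x₁, c) = 1 then G(x₁, x₂; c) = c^{-2} ∑_{b=0}^{c-1} e((−x̄₁ b² + x₂ b)/c), where x̄₁ denotes any integer with x₁ x̄₁ ≡ 1 (mod c). -/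
open Complex

/-- `e(x) = exp(2πix)`. -/
noncomputable def eAdd (x : ℝ) : ℂ := Complex.exp (2 * Real.pi * Complex.I * x)

/-- The Kloosterman sum `S(a, b; c) = ∑_{d mod c, (d,c)=1} e((ad + b d̄)/c)`,
where `d̄` is the inverse of `d` modulo `c` (computed in `ZMod c`). -/
noncomputable def kloos (a b : ℤ) (c : ℕ) : ℂ :=
  ∑ d ∈ (Finset.range c).filter (fun d => Nat.gcd d c = 1),
    eAdd (((a * (d : ℤ) + b * ((((d : ZMod c)⁻¹).val : ℤ)) : ℤ) : ℝ) / c)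

/-- The arithmetic part `G(x₁, x₂; c) = c^{-3} ∑_{a,b mod c} S(a, b²; c) e((a x₁ + b x₂)/c)`. -/
noncomputable def Garith (x₁ x₂ : ℤ) (c : ℕ) : ℂ :=
  ((c : ℂ) ^ 3)⁻¹ *
    ∑ a ∈ Finset.range c, ∑ b ∈ Finset.range c,
      kloos (a : ℤ) ((b : ℤ) ^ 2) c * eAdd ((((a : ℤ) * x₁ + (b : ℤ) * x₂ : ℤ) : ℝ) / c)

/-!
Write `e(k/c)` as the standard additive character `ψ` of `ZMod c` and the Kloosterman sum as a
sum over units `u`. Summing over `a` first, orthogonality gives `∑ₐ ψ(a (u + x₁)) = c · [u = -x₁]`,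
so only the unit `u = -x₁` survives: there is none when `x₁` is not invertible mod `c`, and
otherwise `u⁻¹ = -x̄₁`, which leaves `c⁻² ∑_b ψ(-x̄₁ b² + x₂ b)`.
-/

open Finset

section Kloosterman

variable {R R' : Type*} [CommRing R] [Fintype R] [DecidableEq R] [CommRing R'] [IsDomain R']

def kloosterman (ψ : AddChar R R') (a b : R) : R' :=
  ∑ u : Rˣ, ψ (a * u + b * ↑u⁻¹)

theorem sum_kloosterman_mul_addChar {ψ : AddChar R R'} (hψ : ψ.IsPrimitive) (x b : R) :
    ∑ a : R, kloosterman ψ a b * ψ (a * x) =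
      Fintype.card R * ∑ u : Rˣ, if (u : R) + x = 0 then ψ (b * ↑u⁻¹) else 0 := by
  have hsplit : ∀ (a : R) (u : Rˣ), ψ (a * u + b * ↑u⁻¹) * ψ (a * x) =
      ψ (a * (u + x)) * ψ (b * ↑u⁻¹) := by
    intro a u
    rw [← AddChar.map_add_eq_mul, ← AddChar.map_add_eq_mul]
    ring_nf
  simp_rw [kloosterman, sum_mul, hsplit]
  rw [sum_comm, mul_sum]
  refine sum_congr rfl fun u _ => ?_
  rw [← sum_mul, AddChar.sum_mulShift _ hψ]
  split_ifs <;> simp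

theorem sum_kloosterman_mul_addChar_of_not_isUnit {ψ : AddChar R R'} (hψ : ψ.IsPrimitive)
    {x : R} (hx : ¬IsUnit x) (b : R) :
    ∑ a : R, kloosterman ψ a b * ψ (a * x) = 0 := by
  rw [sum_kloosterman_mul_addChar hψ, sum_eq_zero, mul_zero]
  intro u _
  rw [if_neg]
  intro hux
  obtain rfl := eq_neg_of_add_eq_zero_right hux
  exact hx u.isUnit.neg

theorem sum_kloosterman_mul_addChar_of_mul_eq_one {ψ : AddChar R R'} (hψ : ψ.IsPrimitive)
    {x y : R} (hxy : x * y = 1) (b : R) :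
    ∑ a : R, kloosterman ψ a b * ψ (a * x) = Fintype.card R * ψ (-(b * y)) := by
  let v : Rˣ := ⟨-x, -y, by rw [neg_mul_neg, hxy], by rw [neg_mul_neg, mul_comm, hxy]⟩
  have hv : ∀ u : Rˣ, (u : R) + x = 0 ↔ v = u := by
    intro u
    rw [Units.ext_iff, add_eq_zero_iff_eq_neg, eq_comm]
  simp_rw [sum_kloosterman_mul_addChar hψ, hv, sum_ite_eq, mem_univ, if_true, v, Units.inv_mk,
    mul_neg]

end Kloosterman

theorem sum_range_eq_sum_zmod {M : Type*} [AddCommMonoid M] (c : ℕ) [NeZero c]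
    (f : ZMod c → M) : ∑ a ∈ range c, f a = ∑ x : ZMod c, f x :=
  sum_nbij' Nat.cast ZMod.val (fun _ _ => mem_univ _)
    (fun x _ => mem_range.2 (ZMod.val_lt x))
    (fun _ ha => ZMod.val_cast_of_lt (mem_range.1 ha))
    (fun x _ => ZMod.natCast_zmod_val x) (fun _ _ => rfl)

theorem sum_filter_coprime_eq_sum_units {M : Type*} [AddCommMonoid M] (c : ℕ) [NeZero c]
    (f : ZMod c → M) :
    ∑ d ∈ (range c).filter (fun d => Nat.gcd d c = 1), f d = ∑ u : (ZMod c)ˣ, f u :=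
  sum_bij' (fun d hd => ZMod.unitOfCoprime d (mem_filter.1 hd).2) (fun u _ => (u : ZMod c).val)
    (fun _ _ => mem_univ _)
    (fun u _ => mem_filter.2 ⟨mem_range.2 (ZMod.val_lt _), ZMod.val_coe_unit_coprime u⟩)
    (fun _ hd => by
      rw [ZMod.coe_unitOfCoprime, ZMod.val_cast_of_lt (mem_range.1 (mem_filter.1 hd).1)])
    (fun u _ => Units.ext (ZMod.natCast_zmod_val _))
    (fun _ _ => by rw [ZMod.coe_unitOfCoprime])

theorem eAdd_intCast_div (c : ℕ) [NeZero c] (k : ℤ) :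
    eAdd ((k : ℝ) / c) = ZMod.stdAddChar (k : ZMod c) := by
  rw [ZMod.stdAddChar_coe, eAdd]
  push_cast
  ring_nf

theorem kloos_eq_kloosterman (c : ℕ) [NeZero c] (a b : ℤ) :
    kloos a b c = kloosterman ZMod.stdAddChar (a : ZMod c) (b : ZMod c) := by
  simp_rw [kloos, kloosterman, ← ZMod.inv_coe_unit]
  rw [← sum_filter_coprime_eq_sum_units c (fun d : ZMod c => ZMod.stdAddChar
    ((a : ZMod c) * d + (b : ZMod c) * d⁻¹))]
  refine sum_congr rfl fun d _ => ?_
  rw [eAdd_intCast_div]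
  push_cast
  rw [ZMod.natCast_zmod_val]

theorem Garith_eq_sum_kloosterman (c : ℕ) [NeZero c] (x₁ x₂ : ℤ) :
    Garith x₁ x₂ c = ((c : ℂ) ^ 3)⁻¹ * ∑ b : ZMod c,
      (∑ a : ZMod c, kloosterman ZMod.stdAddChar a (b ^ 2) * ZMod.stdAddChar (a * (x₁ : ZMod c))) *
        ZMod.stdAddChar (b * (x₂ : ZMod c)) := by
  rw [Garith, sum_comm]
  simp_rw [← sum_range_eq_sum_zmod c, kloos_eq_kloosterman, eAdd_intCast_div, sum_mul]
  push_cast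
  simp_rw [AddChar.map_add_eq_mul, mul_assoc]

theorem ZMod.isUnit_intCast_iff_gcd_eq_one (c : ℕ) (x : ℤ) :
    IsUnit (x : ZMod c) ↔ Int.gcd x c = 1 := by
  have hnatAbs : IsUnit (x : ZMod c) ↔ IsUnit (x.natAbs : ZMod c) := by
    rcases Int.natAbs_eq x with h | h <;> rw [h] <;> simp
  rw [hnatAbs, ZMod.isUnit_iff_coprime]
  rfl

/-- Evaluation of the arithmetic part: `G(x₁, x₂; c)` vanishes unless
`gcd(x₁, c) = 1`, in which case it equals
`c^{-2} ∑_{b mod c} e((−x̄₁ b² + x₂ b)/c)` for any inverse `x̄₁` of `x₁` mod `c`. -/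
theorem Garith_eval (c : ℕ) (hc : 0 < c) (x₁ x₂ : ℤ) :
    (1 < Int.gcd x₁ (c : ℤ) → Garith x₁ x₂ c = 0) ∧
    (Int.gcd x₁ (c : ℤ) = 1 → ∀ y : ℤ, x₁ * y ≡ 1 [ZMOD (c : ℤ)] →
      Garith x₁ x₂ c =
        ((c : ℂ) ^ 2)⁻¹ *
          ∑ b ∈ Finset.range c, eAdd (((-y * (b : ℤ) ^ 2 + x₂ * (b : ℤ) : ℤ) : ℝ) / c)) := by
  have : NeZero c := ⟨hc.ne'⟩
  have hψ := ZMod.isPrimitive_stdAddChar c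
  refine ⟨fun hgcd => ?_, fun _ y hy => ?_⟩
  · have hx : ¬IsUnit (x₁ : ZMod c) := by
      rw [ZMod.isUnit_intCast_iff_gcd_eq_one]
      omega
    simp_rw [Garith_eq_sum_kloosterman, sum_kloosterman_mul_addChar_of_not_isUnit hψ hx, zero_mul,
      sum_const_zero, mul_zero]
  · have hxy : (x₁ : ZMod c) * y = 1 := by
      exact_mod_cast (ZMod.intCast_eq_intCast_iff _ _ c).2 hy
    simp_rw [Garith_eq_sum_kloosterman, sum_kloosterman_mul_addChar_of_mul_eq_one hψ hxy,
      ZMod.card, mul_assoc, ← AddChar.map_add_eq_mul, ← mul_sum, ← mul_assoc,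
      ← sum_range_eq_sum_zmod c, eAdd_intCast_div]
    congr 1
    · field_simp
    · refine sum_congr rfl fun b _ => ?_
      push_cast
      ring_nf
end

section
/- Define, for an integer x and a positive integer c, G₁(x; c) = c^{-2} ∑_{b=0}^{c-1} e(−x̄ b²/c) if gcd(x, c) = 1 (where x̄ is any integer with x x̄ ≡ 1 (mod c)), and G₁(x; c) = 0 if gcd(x, c) > 1. Then there exists an absolute constant K > 0 such that for every integer x and every real C ≥ 1, one has ∑_{C ≤ c ≤ 2C} |G₁(x; c)|² ≤ K / C², the sum being over all integers c in the interval [C, 2C]. -/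
/-!
Completing the square gives `|∑_z ψ(a z²)|² = c · ∑_{2ah = 0} ψ(a h²)` for a primitive additive
character `ψ` of `ZMod c`, and for a unit `a` the condition `2ah = 0` has at most two solutions.
Hence `|G₁(x; c)|² ≤ 2 / c³`, and summing over the at most `2C` integers `c ∈ [C, 2C]` gives `4 / C²`.
-/

open Complex

/-- `G₁(x; c) = c^{-2} ∑_{b mod c} e(−x̄ b²/c)` when `gcd(x, c) = 1` (with `x̄` the
inverse of `x` mod `c`, computed in `ZMod c`), and `0` otherwise. -/
noncomputable def Gone (x : ℤ) (c : ℕ) : ℂ :=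
  if Int.gcd x (c : ℤ) = 1 then
    ((c : ℂ) ^ 2)⁻¹ *
      ∑ b ∈ Finset.range c, eAdd (((-((((x : ZMod c)⁻¹).val : ℤ)) * (b : ℤ) ^ 2 : ℤ) : ℝ) / c)
  else 0

open Finset
open scoped ComplexConjugate

namespace AddChar

variable {R K : Type*} [CommRing R] [Fintype R] [DecidableEq R] [RCLike K]

-- Substituting `z = w + h` gives `ψ (a z²) ψ (-a w²) = ψ (a h²) ψ (w (2 a h))`, and the sum
-- over `w` vanishes unless `2 a h = 0`.
lemma sum_mul_sq_mul_conj {ψ : AddChar R K} (hψ : ψ.IsPrimitive) (a : R) :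
    (∑ z, ψ (a * z ^ 2)) * conj (∑ z, ψ (a * z ^ 2)) =
      ∑ h, ψ (a * h ^ 2) * if 2 * a * h = 0 then (Fintype.card R : K) else 0 := by
  calc _ = ∑ w, ∑ h, ψ (a * h ^ 2) * ψ (w * (2 * a * h)) := by
        rw [map_sum, sum_mul_sum, sum_comm]
        refine sum_congr rfl fun w _ => ?_
        rw [← Equiv.sum_comp (Equiv.addLeft w)]
        refine sum_congr rfl fun h _ => ?_
        rw [← map_neg_eq_conj, ← map_add_eq_mul, ← map_add_eq_mul, Equiv.coe_addLeft]
        congr 1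
        ring
    _ = _ := by
        rw [sum_comm]
        simp_rw [← mul_sum, sum_mulShift _ hψ]
        push_cast; rfl

lemma norm_sum_mul_sq_sq_le {ψ : AddChar R K} (hψ : ψ.IsPrimitive) (a : R) :
    ‖∑ z, ψ (a * z ^ 2)‖ ^ 2 ≤ Fintype.card R * #{h | 2 * a * h = 0} := by
  calc ‖∑ z, ψ (a * z ^ 2)‖ ^ 2 = ‖(∑ z, ψ (a * z ^ 2)) * conj (∑ z, ψ (a * z ^ 2))‖ := by
        rw [norm_mul, RCLike.norm_conj, sq]
    _ ≤ ∑ h, ‖ψ (a * h ^ 2) * if 2 * a * h = 0 then (Fintype.card R : K) else 0‖ := by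
        rw [sum_mul_sq_mul_conj hψ]; exact norm_sum_le _ _
    _ = ∑ h, if 2 * a * h = 0 then (Fintype.card R : ℝ) else 0 := by
        refine sum_congr rfl fun h _ => ?_
        split_ifs <;> simp
    _ = _ := by rw [← sum_filter, sum_const, nsmul_eq_mul, mul_comm]

end AddChar

namespace ZMod

variable {c : ℕ} [NeZero c]

lemma card_two_mul_eq_zero_le : #{h : ZMod c | 2 * h = 0} ≤ 2 := by
  convert IsAddCyclic.card_nsmul_eq_zero_le (α := ZMod c) two_pos using 3
  simp [two_mul]

lemma norm_sum_stdAddChar_mul_sq_sq_le {a : ZMod c} (ha : IsUnit a) :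
    ‖∑ z, stdAddChar (a * z ^ 2)‖ ^ 2 ≤ 2 * c := by
  have hcard : #{h : ZMod c | 2 * a * h = 0} = #{h : ZMod c | 2 * h = 0} := by
    congr 1; ext h; simp [mul_right_comm _ a, ha.mul_left_eq_zero]
  calc _ ≤ c * (#{h : ZMod c | 2 * a * h = 0} : ℝ) := by
        simpa [ZMod.card] using AddChar.norm_sum_mul_sq_sq_le (isPrimitive_stdAddChar c) a
    _ ≤ c * 2 := by gcongr; exact_mod_cast hcard ▸ card_two_mul_eq_zero_le
    _ = 2 * c := mul_comm _ _

lemma sum_range_natCast {M : Type*} [AddCommMonoid M] (f : ZMod c → M) :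
    ∑ b ∈ range c, f b = ∑ z, f z :=
  sum_nbij' (↑) val (by simp) (by simp [val_lt]) (fun b hb => val_cast_of_lt (mem_range.mp hb))
    (by simp) (by simp)

end ZMod

lemma Gone_eq_of_gcd_eq_one {x : ℤ} {c : ℕ} [NeZero c] (h : Int.gcd x c = 1) :
    Gone x c = ((c : ℂ) ^ 2)⁻¹ * ∑ z : ZMod c, ZMod.stdAddChar (-(x : ZMod c)⁻¹ * z ^ 2) := by
  rw [Gone, if_pos h, ← ZMod.sum_range_natCast]
  congr 1
  refine sum_congr rfl fun b _ => ?_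
  have hcast : -(x : ZMod c)⁻¹ * (b : ZMod c) ^ 2 =
      ((-(((x : ZMod c)⁻¹.val : ℤ)) * (b : ℤ) ^ 2 : ℤ) : ZMod c) := by
    push_cast; rw [ZMod.natCast_val, ZMod.cast_id]
  rw [hcast, ZMod.stdAddChar_coe, eAdd]
  push_cast
  ring_nf

lemma norm_Gone_sq_le (x : ℤ) {c : ℕ} (hc : c ≠ 0) : ‖Gone x c‖ ^ 2 ≤ 2 / (c : ℝ) ^ 3 := by
  have : NeZero c := ⟨hc⟩
  by_cases h : Int.gcd x c = 1
  · have hx : IsUnit (x : ZMod c) := (ZMod.coe_int_isUnit_iff_isCoprime x c).mpr <|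
      Int.isCoprime_iff_gcd_eq_one.mpr (by rwa [Int.gcd_comm])
    rw [Gone_eq_of_gcd_eq_one h, norm_mul, mul_pow, norm_inv, norm_pow, Complex.norm_natCast]
    calc _ ≤ (((c : ℝ) ^ 2)⁻¹) ^ 2 * (2 * c) := by
          gcongr; exact ZMod.norm_sum_stdAddChar_mul_sq_sq_le (ZMod.isUnit_inv hx).neg
      _ = 2 / (c : ℝ) ^ 3 := by field_simp
  · rw [Gone, if_neg h, norm_zero, zero_pow two_ne_zero]; positivity

lemma card_Icc_ceil_floor_two_mul_le {C : ℝ} (hC : 1 ≤ C) :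
    (#(Icc ⌈C⌉₊ ⌊2 * C⌋₊) : ℝ) ≤ 2 * C := by
  have h_floor : (⌊2 * C⌋₊ : ℝ) ≤ 2 * C := Nat.floor_le (by linarith)
  have h_ceil : C ≤ ⌈C⌉₊ := Nat.le_ceil C
  rw [Nat.card_Icc]
  rcases le_total ⌈C⌉₊ (⌊2 * C⌋₊ + 1) with h | h
  · rw [Nat.cast_sub h]; push_cast; linarith
  · rw [Nat.sub_eq_zero_of_le h]; push_cast; linarith

/-- Second moment estimate for `G₁`: there is an absolute `K > 0` such that for
every integer `x` and every real `C ≥ 1`,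
`∑_{C ≤ c ≤ 2C} |G₁(x; c)|² ≤ K / C²`. -/
theorem Gone_second_moment :
    ∃ K : ℝ, 0 < K ∧ ∀ x : ℤ, ∀ C : ℝ, 1 ≤ C →
      ∑ c ∈ Finset.Icc ⌈C⌉₊ ⌊2 * C⌋₊, ‖Gone x c‖ ^ 2 ≤ K / C ^ 2 := by
  refine ⟨4, by norm_num, fun x C hC => ?_⟩
  have hC0 : 0 < C := by linarith
  calc ∑ c ∈ Icc ⌈C⌉₊ ⌊2 * C⌋₊, ‖Gone x c‖ ^ 2
      ≤ ∑ c ∈ Icc ⌈C⌉₊ ⌊2 * C⌋₊, 2 / C ^ 3 := by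
        refine sum_le_sum fun c hc => ?_
        have hCc : C ≤ c := Nat.ceil_le.mp (mem_Icc.mp hc).1
        have hc0 : c ≠ 0 := by rintro rfl; norm_num at hCc; linarith
        exact (norm_Gone_sq_le x hc0).trans (by gcongr)
    _ = #(Icc ⌈C⌉₊ ⌊2 * C⌋₊) * (2 / C ^ 3) := by rw [sum_const, nsmul_eq_mul]
    _ ≤ 2 * C * (2 / C ^ 3) := by gcongr; exact card_Icc_ceil_floor_two_mul_le hC
    _ = 4 / C ^ 2 := by field_simp; ring
end
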